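/- arXiv:2002.12614 — 4 statements merged into one kernel-verified Lean document; each statement's English description precedes it below -/
import Mathlib

section
/- For every k ≥ 2 and N ≥ 1, the set of correlations arising from k-partite general bilocal behaviours with N inputs and 2 outputs (±1) per party coincides with the set of correlations arising from k-partite non-signalling bilocal behaviours (those bilocal models in which the behaviours on each subset of the bipartition are required to be non-signalling). -/
open scoped BigOperators

noncomputable section

namespace Stmt1

/-- The sign (±1) value associated to a boolean outcome. -/
def sgn (b : Bool) : ℝ := if b then 1 else -1

/-- A behaviour over an index set `ι` of parties, with `N` inputs and 2 outputs
(encoded by `Bool`) per party. -/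
def IsBehaviour {ι : Type} [Fintype ι] [DecidableEq ι] {N : ℕ}
    (P : (ι → Fin N) → (ι → Bool) → ℝ) : Prop :=
  (∀ x a, 0 ≤ P x a) ∧ ∀ x, (∑ a, P x a) = 1

/-- Non-signalling: for every subset `S` of the parties, the marginal distribution of the
outputs of the parties in `S` does not depend on the inputs of the parties outside `S`. -/
def NonSignalling {ι : Type} [Fintype ι] [DecidableEq ι] {N : ℕ}
    (P : (ι → Fin N) → (ι → Bool) → ℝ) : Prop :=
  ∀ S : Finset ι, ∀ x x' : ι → Fin N, (∀ i ∈ S, x i = x' i) →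
    ∀ a : ι → Bool,
      (∑ b ∈ Finset.univ.filter (fun b : ι → Bool => ∀ i ∈ S, b i = a i), P x b)
        = ∑ b ∈ Finset.univ.filter (fun b : ι → Bool => ∀ i ∈ S, b i = a i), P x' b

/-- A bilocal product term across a strict non-empty bipartition `M | Mᶜ` of the `k` parties:
the product of a behaviour on the parties in `M` and a behaviour on the parties in `Mᶜ`.
If `ns = true`, both factors are moreover required to be non-signalling. -/
def BilocalTerm {k N : ℕ} (ns : Bool)
    (P : (Fin k → Fin N) → (Fin k → Bool) → ℝ) : Prop :=
  ∃ M : Finset (Fin k), M.Nonempty ∧ M ≠ Finset.univ ∧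
    ∃ Q : (↥M → Fin N) → (↥M → Bool) → ℝ,
    ∃ R : (↥(Mᶜ) → Fin N) → (↥(Mᶜ) → Bool) → ℝ,
      IsBehaviour Q ∧ IsBehaviour R ∧
      (ns = true → NonSignalling Q ∧ NonSignalling R) ∧
      ∀ x a, P x a = Q (fun i => x i.1) (fun i => a i.1) * R (fun i => x i.1) (fun i => a i.1)

/-- Bilocal behaviours: convex combinations of bilocal product terms (across arbitrary
bipartitions).  `ns = false` gives general bilocal behaviours, `ns = true` gives
non-signalling bilocal behaviours. -/
def Bilocal {k N : ℕ} (ns : Bool)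
    (P : (Fin k → Fin N) → (Fin k → Bool) → ℝ) : Prop :=
  ∃ (m : ℕ) (p : Fin m → ℝ) (Ps : Fin m → (Fin k → Fin N) → (Fin k → Bool) → ℝ),
    (∀ j, 0 ≤ p j) ∧ (∑ j, p j) = 1 ∧ (∀ j, BilocalTerm ns (Ps j)) ∧
    ∀ x a, P x a = ∑ j, p j * Ps j x a

/-- The correlation associated to a behaviour. -/
def corrOf {k N : ℕ} (P : (Fin k → Fin N) → (Fin k → Bool) → ℝ) :
    (Fin k → Fin N) → ℝ :=
  fun x => ∑ a, (∏ i, sgn (a i)) * P x a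

section Aux

set_option linter.unusedSectionVars false

variable {ι : Type} [Fintype ι] [DecidableEq ι] {N : ℕ}

lemma sgn_not (b : Bool) : sgn (!b) = - sgn b := by cases b <;> simp [sgn]
lemma sgn_mul_self (b : Bool) : sgn b * sgn b = 1 := by cases b <;> norm_num [sgn]
lemma abs_sgn (b : Bool) : |sgn b| = 1 := by cases b <;> simp [sgn]
lemma abs_prod_sgn (a : ι → Bool) : |∏ i, sgn (a i)| = 1 := by
  rw [Finset.abs_prod]; simp [abs_sgn]
lemma prod_sgn_mul_self (a : ι → Bool) : (∏ i, sgn (a i)) * (∏ i, sgn (a i)) = 1 := by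
  rw [← Finset.prod_mul_distrib]; simp [sgn_mul_self]

lemma prod_sgn_update (b : ι → Bool) (i₀ : ι) :
    ∏ i, sgn (Function.update b i₀ (!b i₀) i) = - ∏ i, sgn (b i) := by
  rw [Finset.prod_eq_mul_prod_sdiff_singleton_of_mem (Finset.mem_univ i₀),
      Finset.prod_eq_mul_prod_sdiff_singleton_of_mem (Finset.mem_univ i₀) (fun i => sgn (b i))]
  have h1 : ∀ i ∈ Finset.univ \ {i₀}, sgn (Function.update b i₀ (!b i₀) i) = sgn (b i) := by
    intro i hi
    have : i ≠ i₀ := by simpa using (Finset.mem_sdiff.mp hi).2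
    rw [Function.update_of_ne this]
  rw [Finset.prod_congr rfl h1, Function.update_self, sgn_not]
  ring

lemma sum_prod_sgn_filter (S : Finset ι) (a : ι → Bool) {i₀ : ι} (hi₀ : i₀ ∉ S) :
    ∑ b ∈ Finset.univ.filter (fun b : ι → Bool => ∀ i ∈ S, b i = a i),
      ∏ i, sgn (b i) = 0 := by
  refine Finset.sum_involution (fun b _ => Function.update b i₀ (!b i₀)) ?_ ?_ ?_ ?_
  · intro b _
    rw [prod_sgn_update]; ring
  · intro b _ _ heq
    have := congrFun heq i₀
    simp at this
  · intro b hb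
    simp only [Finset.mem_filter, Finset.mem_univ, true_and] at hb ⊢
    intro i hi
    rw [Function.update_of_ne (by rintro rfl; exact hi₀ hi)]
    exact hb i hi
  · intro b _
    funext i
    by_cases h : i = i₀
    · subst h; simp
    · simp [Function.update_of_ne h]

lemma sum_prod_sgn [Nonempty ι] :
    ∑ b : ι → Bool, ∏ i, sgn (b i) = 0 := by
  obtain ⟨i₀⟩ := ‹Nonempty ι›
  have h := sum_prod_sgn_filter (∅ : Finset ι) (fun _ => true) (i₀ := i₀) (by simp)
  simpa using h

/-- The "correlation box" behaviour with prescribed correlation `f`. -/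
def box (f : (ι → Fin N) → ℝ) : (ι → Fin N) → (ι → Bool) → ℝ :=
  fun x a => (1 + f x * ∏ i, sgn (a i)) / 2 ^ (Fintype.card ι)

/-- Correlation of a behaviour on a sub-collection of parties. -/
def corrS (Q : (ι → Fin N) → (ι → Bool) → ℝ) : (ι → Fin N) → ℝ :=
  fun x => ∑ a, (∏ i, sgn (a i)) * Q x a

lemma card_fun_bool : (Fintype.card (ι → Bool) : ℝ) = 2 ^ (Fintype.card ι) := by
  rw [Fintype.card_fun, Fintype.card_bool]
  push_cast
  ring

lemma box_isBehaviour [Nonempty ι] {f : (ι → Fin N) → ℝ} (hf : ∀ x, |f x| ≤ 1) :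
    IsBehaviour (box f) := by
  constructor
  · intro x a
    apply div_nonneg _ (by positivity)
    have h1 : |f x * ∏ i, sgn (a i)| ≤ 1 := by
      rw [abs_mul, abs_prod_sgn, mul_one]; exact hf x
    linarith [(abs_le.mp h1).1]
  · intro x
    unfold box
    rw [← Finset.sum_div]
    rw [Finset.sum_add_distrib, ← Finset.mul_sum, sum_prod_sgn, mul_zero, add_zero]
    rw [Finset.sum_const, Finset.card_univ, nsmul_eq_mul, mul_one, card_fun_bool]
    exact div_self (by positivity)

lemma box_nonSignalling [Nonempty ι] (f : (ι → Fin N) → ℝ) :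
    NonSignalling (box f) := by
  intro S x x' hxx' a
  by_cases hS : S = Finset.univ
  · have : x = x' := funext fun i => hxx' i (hS ▸ Finset.mem_univ i)
    rw [this]
  · obtain ⟨i₀, hi₀⟩ : ∃ i₀, i₀ ∉ S := by
      by_contra h
      push_neg at h
      exact hS (Finset.eq_univ_iff_forall.mpr h)
    have hT := sum_prod_sgn_filter S a hi₀
    have expand : ∀ y : ι → Fin N,
        ∑ b ∈ Finset.univ.filter (fun b : ι → Bool => ∀ i ∈ S, b i = a i), box f y b
          = ((Finset.univ.filter (fun b : ι → Bool => ∀ i ∈ S, b i = a i)).card : ℝ)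
              / 2 ^ (Fintype.card ι) := by
      intro y
      unfold box
      rw [← Finset.sum_div, Finset.sum_add_distrib, ← Finset.mul_sum, hT, mul_zero, add_zero,
        Finset.sum_const, nsmul_eq_mul, mul_one]
    rw [expand x, expand x']

lemma corrS_box [Nonempty ι] (f : (ι → Fin N) → ℝ) (x : ι → Fin N) :
    corrS (box f) x = f x := by
  unfold corrS box
  have h : ∀ a : ι → Bool,
      (∏ i, sgn (a i)) * ((1 + f x * ∏ i, sgn (a i)) / 2 ^ (Fintype.card ι))
        = ((∏ i, sgn (a i)) + f x) / 2 ^ (Fintype.card ι) := by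
    intro a
    have hp := prod_sgn_mul_self a
    field_simp
    linear_combination f x * hp
  rw [Finset.sum_congr rfl fun a _ => h a, ← Finset.sum_div, Finset.sum_add_distrib,
    sum_prod_sgn, zero_add, Finset.sum_const, Finset.card_univ, nsmul_eq_mul, card_fun_bool]
  field_simp

lemma abs_corrS_le_one {Q : (ι → Fin N) → (ι → Bool) → ℝ} (hQ : IsBehaviour Q)
    (x : ι → Fin N) : |corrS Q x| ≤ 1 := by
  unfold corrS
  calc |∑ a, (∏ i, sgn (a i)) * Q x a| ≤ ∑ a, |(∏ i, sgn (a i)) * Q x a| :=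
        Finset.abs_sum_le_sum_abs _ _
    _ = ∑ a, Q x a := by
        refine Finset.sum_congr rfl fun a _ => ?_
        rw [abs_mul, abs_prod_sgn, one_mul, abs_of_nonneg (hQ.1 x a)]
    _ = 1 := hQ.2 x

end Aux

section Split

variable {k N : ℕ}

/-- Splitting a global output assignment along a bipartition `M | Mᶜ`. -/
def splitEquiv (M : Finset (Fin k)) : (Fin k → Bool) ≃ (↥M → Bool) × (↥(Mᶜ) → Bool) where
  toFun a := (fun i => a i.1, fun i => a i.1)
  invFun uv i := if h : i ∈ M then uv.1 ⟨i, h⟩ else uv.2 ⟨i, Finset.mem_compl.mpr h⟩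
  left_inv a := by
    funext i
    by_cases h : i ∈ M <;> simp [h]
  right_inv uv := by
    refine Prod.ext ?_ ?_ <;> funext i
    · simp [i.2]
    · have h : ¬ (i.1 ∈ M) := Finset.mem_compl.mp i.2
      simp [h]

lemma splitEquiv_symm_fst (M : Finset (Fin k)) (u : ↥M → Bool) (v : ↥(Mᶜ) → Bool)
    (i : ↥M) : (splitEquiv M).symm (u, v) i.1 = u i := by
  simp [splitEquiv, i.2]

lemma splitEquiv_symm_snd (M : Finset (Fin k)) (u : ↥M → Bool) (v : ↥(Mᶜ) → Bool)
    (i : ↥(Mᶜ)) : (splitEquiv M).symm (u, v) i.1 = v i := by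
  have h : ¬ (i.1 ∈ M) := Finset.mem_compl.mp i.2
  simp [splitEquiv, h]

lemma prod_sgn_split (M : Finset (Fin k)) (a : Fin k → Bool) :
    ∏ i, sgn (a i) = (∏ i : ↥M, sgn (a i.1)) * ∏ i : ↥(Mᶜ), sgn (a i.1) := by
  rw [Finset.prod_coe_sort M (fun i => sgn (a i)),
    Finset.prod_coe_sort (Mᶜ) (fun i => sgn (a i)), Finset.prod_mul_prod_compl]

lemma corr_term (M : Finset (Fin k))
    (Q : (↥M → Fin N) → (↥M → Bool) → ℝ) (R : (↥(Mᶜ) → Fin N) → (↥(Mᶜ) → Bool) → ℝ)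
    (x : Fin k → Fin N) :
    ∑ a : Fin k → Bool, (∏ i, sgn (a i)) *
        (Q (fun i => x i.1) (fun i => a i.1) * R (fun i => x i.1) (fun i => a i.1))
      = corrS Q (fun i => x i.1) * corrS R (fun i => x i.1) := by
  rw [← Equiv.sum_comp (splitEquiv M).symm
    (fun a : Fin k → Bool => (∏ i, sgn (a i)) *
      (Q (fun i => x i.1) (fun i => a i.1) * R (fun i => x i.1) (fun i => a i.1)))]
  rw [Fintype.sum_prod_type]
  unfold corrS
  rw [Finset.sum_mul_sum]
  refine Finset.sum_congr rfl fun u _ => Finset.sum_congr rfl fun v _ => ?_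
  have h1 : ∀ i : ↥M, (splitEquiv M).symm (u, v) i.1 = u i := splitEquiv_symm_fst M u v
  have h2 : ∀ i : ↥(Mᶜ), (splitEquiv M).symm (u, v) i.1 = v i := splitEquiv_symm_snd M u v
  rw [prod_sgn_split M]
  simp only [h1, h2]
  ring

lemma corr_lin {m : ℕ} (p : Fin m → ℝ) (Ps : Fin m → (Fin k → Fin N) → (Fin k → Bool) → ℝ)
    (x : Fin k → Fin N) :
    corrOf (fun x a => ∑ j, p j * Ps j x a) x = ∑ j, p j * corrOf (Ps j) x := by
  unfold corrOf
  simp only [Finset.mul_sum]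
  rw [Finset.sum_comm]
  refine Finset.sum_congr rfl fun j _ => ?_
  exact Finset.sum_congr rfl fun a _ => by ring

end Split

/-- for every `k ≥ 2` and `N ≥ 1`, the set of correlations of `k`-partite
general bilocal behaviours with `N` inputs and 2 outputs per party coincides with the set of
correlations of `k`-partite non-signalling bilocal behaviours. -/
theorem unbounded_bell_stmt1 {k N : ℕ} (hk : 2 ≤ k) (hN : 1 ≤ N) :
    {γ : (Fin k → Fin N) → ℝ |
        ∃ P, Bilocal false P ∧ ∀ x, corrOf P x = γ x}
      = {γ : (Fin k → Fin N) → ℝ |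
        ∃ P, Bilocal true P ∧ ∀ x, corrOf P x = γ x} := by
  ext γ
  simp only [Set.mem_setOf_eq]
  constructor
  · rintro ⟨P, ⟨m, p, Ps, hp0, hp1, hterm, hP⟩, hγ⟩
    choose M hMne hMu Q R hQ hR _ hfact using hterm
    -- nonempty instances
    have instM : ∀ j, Nonempty ↥(M j) := fun j => (hMne j).coe_sort
    have instMc : ∀ j, Nonempty ↥((M j)ᶜ) := by
      intro j
      obtain ⟨i, hi⟩ : ∃ i, i ∉ M j := by
        by_contra h
        push_neg at h
        exact hMu j (Finset.eq_univ_iff_forall.mpr h)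
      exact ⟨⟨i, Finset.mem_compl.mpr hi⟩⟩
    -- the non-signalling replacement terms
    set Ps' : Fin m → (Fin k → Fin N) → (Fin k → Bool) → ℝ :=
      fun j x a =>
        box (corrS (Q j)) (fun i => x i.1) (fun i => a i.1) *
          box (corrS (R j)) (fun i => x i.1) (fun i => a i.1) with hPs'
    refine ⟨fun x a => ∑ j, p j * Ps' j x a, ⟨m, p, Ps', hp0, hp1, ?_, fun _ _ => rfl⟩, ?_⟩
    · intro j
      haveI := instM j; haveI := instMc j
      refine ⟨M j, hMne j, hMu j, box (corrS (Q j)), box (corrS (R j)),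
        box_isBehaviour (fun y => abs_corrS_le_one (hQ j) y),
        box_isBehaviour (fun y => abs_corrS_le_one (hR j) y),
        fun _ => ⟨box_nonSignalling _, box_nonSignalling _⟩,
        fun x a => rfl⟩
    · intro x
      rw [← hγ x]
      have e1 : corrOf (fun x a => ∑ j, p j * Ps' j x a) x = ∑ j, p j * corrOf (Ps' j) x :=
        corr_lin p Ps' x
      have e2 : corrOf P x = ∑ j, p j * corrOf (Ps j) x := by
        have h : corrOf P x = corrOf (fun x a => ∑ j, p j * Ps j x a) x := by
          unfold corrOf
          exact Finset.sum_congr rfl fun a _ => by rw [hP x a]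
        rw [h]
        exact corr_lin p Ps x
      rw [e1, e2]
      refine Finset.sum_congr rfl fun j _ => ?_
      congr 1
      haveI := instM j; haveI := instMc j
      have hL : corrOf (Ps' j) x = corrS (Q j) (fun i => x i.1) * corrS (R j) (fun i => x i.1) := by
        unfold corrOf
        rw [hPs']
        rw [corr_term (M j) (box (corrS (Q j))) (box (corrS (R j))) x,
          corrS_box, corrS_box]
      have hRw : corrOf (Ps j) x
          = corrS (Q j) (fun i => x i.1) * corrS (R j) (fun i => x i.1) := by
        unfold corrOf
        rw [Finset.sum_congr rfl fun a _ => by rw [hfact j x a]]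
        exact corr_term (M j) (Q j) (R j) x
      rw [hL, hRw]
  · rintro ⟨P, ⟨m, p, Ps, hp0, hp1, hterm, hP⟩, hγ⟩
    refine ⟨P, ⟨m, p, Ps, hp0, hp1, fun j => ?_, hP⟩, hγ⟩
    obtain ⟨M, h1, h2, Q, R, h3, h4, _, h6⟩ := hterm j
    exact ⟨M, h1, h2, Q, R, h3, h4, by simp, h6⟩

end Stmt1
end
end

section
/- A tripartite correlation (γ_{xyz})_{x,y,z=1}^N is the correlation of a general bilocal tripartite behaviour with 2 outputs (±1) per party if and only if γ lies in the convex hull of the set of tensors of the three forms (α_{xy} c_z)_{x,y,z}, (β_{yz} a_x)_{x,y,z}, (δ_{xz} b_y)_{x,y,z}, where (α_{xy}), (β_{yz}), (δ_{xz}) are bipartite non-signalling correlations (equivalently, matrices with all entries of absolute value at most 1) and a_x, b_y, c_z ∈ {−1, +1} for every x, y, z. -/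
open scoped BigOperators
open Kronecker

noncomputable section

namespace BellCorr

/-- The sign (±1) value associated to a boolean outcome. -/
def sgn (b : Bool) : ℝ := if b then 1 else -1

/-- A tripartite behaviour with `N` inputs and 2 outputs (encoded by `Bool`) per party. -/
def IsBeh3 {N : ℕ} (P : Fin N → Fin N → Fin N → Bool → Bool → Bool → ℝ) : Prop :=
  (∀ x y z a b c, 0 ≤ P x y z a b c) ∧
  ∀ x y z, (∑ a, ∑ b, ∑ c, P x y z a b c) = 1

/-- A bipartite behaviour with `N` inputs and 2 outputs per party. -/
def IsBeh2 {N : ℕ} (Q : Fin N → Fin N → Bool → Bool → ℝ) : Prop :=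
  (∀ x y a b, 0 ≤ Q x y a b) ∧ ∀ x y, (∑ a, ∑ b, Q x y a b) = 1

/-- A single-party behaviour with `N` inputs and 2 outputs. -/
def IsBeh1 {N : ℕ} (R : Fin N → Bool → ℝ) : Prop :=
  (∀ x a, 0 ≤ R x a) ∧ ∀ x, (∑ a, R x a) = 1

/-- The correlation of a tripartite behaviour with ±1 outputs. -/
def corr3 {N : ℕ} (P : Fin N → Fin N → Fin N → Bool → Bool → Bool → ℝ) :
    Fin N → Fin N → Fin N → ℝ :=
  fun x y z => ∑ a, ∑ b, ∑ c, sgn a * sgn b * sgn c * P x y z a b c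

/-- A bilocal product term: the product of an arbitrary behaviour on two of the three
parties with an arbitrary behaviour on the remaining party (any bipartition). -/
def BilocTerm3 {N : ℕ} (P : Fin N → Fin N → Fin N → Bool → Bool → Bool → ℝ) : Prop :=
  (∃ Q R, IsBeh2 Q ∧ IsBeh1 R ∧ ∀ x y z a b c, P x y z a b c = Q x y a b * R z c) ∨
  (∃ Q R, IsBeh2 Q ∧ IsBeh1 R ∧ ∀ x y z a b c, P x y z a b c = Q y z b c * R x a) ∨
  (∃ Q R, IsBeh2 Q ∧ IsBeh1 R ∧ ∀ x y z a b c, P x y z a b c = Q x z a c * R y b)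

/-- A tripartite general bilocal behaviour: a convex combination of bilocal product
terms (with no non-signalling restriction on the bipartite factors). -/
def GenBiloc3 {N : ℕ} (P : Fin N → Fin N → Fin N → Bool → Bool → Bool → ℝ) : Prop :=
  ∃ (m : ℕ) (p : Fin m → ℝ)
    (Ps : Fin m → Fin N → Fin N → Fin N → Bool → Bool → Bool → ℝ),
    (∀ j, 0 ≤ p j) ∧ (∑ j, p j) = 1 ∧ (∀ j, BilocTerm3 (Ps j)) ∧
    ∀ x y z a b c, P x y z a b c = ∑ j, p j * Ps j x y z a b c

/-- A vector with all entries equal to `1` or `-1`. -/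
def PM1 {N : ℕ} (v : Fin N → ℝ) : Prop := ∀ x, v x = 1 ∨ v x = -1

/-- The generators of the set of tripartite general bilocal correlations: tensors of the
three forms `(α_{xy} c_z)`, `(β_{yz} a_x)`, `(δ_{xz} b_y)`, where the bipartite factor has
all entries of absolute value at most 1 (i.e. it is a bipartite non-signalling correlation)
and the single-party factor is ±1-valued. -/
def BilocCorrGenerators (N : ℕ) : Set (Fin N → Fin N → Fin N → ℝ) :=
  {γ | ∃ (α : Fin N → Fin N → ℝ) (c : Fin N → ℝ), (∀ x y, |α x y| ≤ 1) ∧ PM1 c ∧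
        ∀ x y z, γ x y z = α x y * c z} ∪
  {γ | ∃ (β : Fin N → Fin N → ℝ) (a : Fin N → ℝ), (∀ y z, |β y z| ≤ 1) ∧ PM1 a ∧
        ∀ x y z, γ x y z = β y z * a x} ∪
  {γ | ∃ (δ : Fin N → Fin N → ℝ) (b : Fin N → ℝ), (∀ x z, |δ x z| ≤ 1) ∧ PM1 b ∧
        ∀ x y z, γ x y z = δ x z * b y}

/-- A tripartite general bilocal correlation: an element of the convex hull of the tensors
of the three forms `(α_{xy} c_z)`, `(β_{yz} a_x)`, `(δ_{xz} b_y)`. -/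
def IsBilocCorr3 {N : ℕ} (γ : Fin N → Fin N → Fin N → ℝ) : Prop :=
  γ ∈ convexHull ℝ (BilocCorrGenerators N)

/-- A tripartite fully local correlation:
an element of the convex hull of `{(a_x b_y c_z) : a_x, b_y, c_z = ±1}`. -/
def IsLocalCorr3 {N : ℕ} (γ : Fin N → Fin N → Fin N → ℝ) : Prop :=
  γ ∈ convexHull ℝ
    {γ' : Fin N → Fin N → Fin N → ℝ | ∃ a b c : Fin N → ℝ, PM1 a ∧ PM1 b ∧ PM1 c ∧
      ∀ x y z, γ' x y z = a x * b y * c z}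

/-- A self-adjoint operator of (operator) norm at most 1 on `ℂ^d`, as a matrix: it is
Hermitian and it is an ℓ₂-contraction. -/
def IsContraction {d : ℕ} (A : Matrix (Fin d) (Fin d) ℂ) : Prop :=
  A.IsHermitian ∧
  ∀ v : Fin d → ℂ, (∑ i, Complex.normSq (A.mulVec v i)) ≤ ∑ i, Complex.normSq (v i)

/-- A tripartite quantum correlation: `γ x y z = ⟨ψ| A_x ⊗ B_y ⊗ C_z |ψ⟩` for some
finite-dimensional Hilbert spaces `ℂ^{d₁}, ℂ^{d₂}, ℂ^{d₃}`, a unit vector `ψ` in their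
tensor product, and self-adjoint operators `A_x, B_y, C_z` of norm at most 1. -/
def IsQuantumCorr3 {N : ℕ} (γ : Fin N → Fin N → Fin N → ℝ) : Prop :=
  ∃ (d₁ d₂ d₃ : ℕ) (ψ : Fin d₁ × Fin d₂ × Fin d₃ → ℂ)
    (A : Fin N → Matrix (Fin d₁) (Fin d₁) ℂ)
    (B : Fin N → Matrix (Fin d₂) (Fin d₂) ℂ)
    (C : Fin N → Matrix (Fin d₃) (Fin d₃) ℂ),
    (∑ i, Complex.normSq (ψ i)) = 1 ∧
    (∀ x, IsContraction (A x)) ∧ (∀ y, IsContraction (B y)) ∧ (∀ z, IsContraction (C z)) ∧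
    ∀ x y z, ((γ x y z : ℝ) : ℂ) =
      ∑ i, ∑ j, (starRingEnd ℂ) (ψ i) * ((A x ⊗ₖ (B y ⊗ₖ C z)) i j) * ψ j

/-- The value `⟨M, γ⟩ = ∑_{x,y,z} M_{xyz} γ_{xyz}` of a Bell functional on a correlation. -/
def bellVal {N : ℕ} (M γ : Fin N → Fin N → Fin N → ℝ) : ℝ :=
  ∑ x, ∑ y, ∑ z, M x y z * γ x y z

/-- `ω_{Q³_cor}(M)`: the supremum of `|⟨M, γ⟩|` over tripartite quantum correlations. -/
def qSup {N : ℕ} (M : Fin N → Fin N → Fin N → ℝ) : ℝ :=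
  sSup {v | ∃ γ, IsQuantumCorr3 γ ∧ v = |bellVal M γ|}

/-- `ω_{BL³_cor}(M)`: the supremum of `|⟨M, γ⟩|` over tripartite general bilocal
correlations. -/
def bSup {N : ℕ} (M : Fin N → Fin N → Fin N → ℝ) : ℝ :=
  sSup {v | ∃ γ, IsBilocCorr3 γ ∧ v = |bellVal M γ|}

/-- `ω_{L³_cor}(M)`: the supremum of `|⟨M, γ⟩|` over tripartite fully local correlations. -/
def lSup {N : ℕ} (M : Fin N → Fin N → Fin N → ℝ) : ℝ :=
  sSup {v | ∃ γ, IsLocalCorr3 γ ∧ v = |bellVal M γ|}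

/-! ### Auxiliary lemmas -/

/-- Linearity of `corr3` over convex combinations of behaviours. -/
lemma corr3_sum {N m : ℕ} (p : Fin m → ℝ)
    (Ps : Fin m → Fin N → Fin N → Fin N → Bool → Bool → Bool → ℝ)
    (x y z : Fin N) :
    corr3 (fun x y z a b c => ∑ j, p j * Ps j x y z a b c) x y z
      = ∑ j, p j * corr3 (Ps j) x y z := by
  simp only [corr3, Fintype.sum_bool, Finset.mul_sum, sgn]
  simp only [← Finset.sum_add_distrib]
  exact Finset.sum_congr rfl fun j _ => by ring

/-- The solid cube `[-1,1]^N` is the convex hull of the ±1 vectors. -/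
lemma cube_mem {N : ℕ} (t : Fin N → ℝ) (ht : ∀ i, |t i| ≤ 1) :
    t ∈ convexHull ℝ {v : Fin N → ℝ | PM1 v} := by
  have hset : {v : Fin N → ℝ | PM1 v} = Set.pi Set.univ (fun _ => ({1, -1} : Set ℝ)) := by
    ext v; simp [PM1, Set.mem_pi]
  rw [hset]
  apply mem_convexHull_pi
  intro i _
  rw [convexHull_pair, segment_eq_Icc']
  have := abs_le.mp (ht i)
  constructor
  · simpa using this.1
  · simpa using this.2

/-- A linear map sends the cube into the convex hull of the images of ±1 vectors. -/
lemma linmap_mem_hull {N : ℕ} {S : Set (Fin N → Fin N → Fin N → ℝ)}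
    (L : (Fin N → ℝ) →ₗ[ℝ] (Fin N → Fin N → Fin N → ℝ))
    (hS : ∀ v, PM1 v → L v ∈ S) (t : Fin N → ℝ) (ht : ∀ i, |t i| ≤ 1) :
    L t ∈ convexHull ℝ S := by
  have h2 : L t ∈ L '' (convexHull ℝ {v : Fin N → ℝ | PM1 v}) :=
    ⟨t, cube_mem t ht, rfl⟩
  rw [L.image_convexHull] at h2
  refine convexHull_mono ?_ h2
  rintro _ ⟨v, hv, rfl⟩
  exact hS v hv

def Lxy {N : ℕ} (α : Fin N → Fin N → ℝ) :
    (Fin N → ℝ) →ₗ[ℝ] (Fin N → Fin N → Fin N → ℝ) where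
  toFun t := fun x y z => α x y * t z
  map_add' t s := by funext x y z; simp [mul_add]
  map_smul' r t := by funext x y z; simp [smul_eq_mul]; ring

def Lyz {N : ℕ} (β : Fin N → Fin N → ℝ) :
    (Fin N → ℝ) →ₗ[ℝ] (Fin N → Fin N → Fin N → ℝ) where
  toFun t := fun x y z => β y z * t x
  map_add' t s := by funext x y z; simp [mul_add]
  map_smul' r t := by funext x y z; simp [smul_eq_mul]; ring

def Lxz {N : ℕ} (δ : Fin N → Fin N → ℝ) :
    (Fin N → ℝ) →ₗ[ℝ] (Fin N → Fin N → Fin N → ℝ) where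
  toFun t := fun x y z => δ x z * t y
  map_add' t s := by funext x y z; simp [mul_add]
  map_smul' r t := by funext x y z; simp [smul_eq_mul]; ring

lemma corr3_prod1 {N : ℕ} {P : Fin N → Fin N → Fin N → Bool → Bool → Bool → ℝ}
    {Q : Fin N → Fin N → Bool → Bool → ℝ} {R : Fin N → Bool → ℝ}
    (hP : ∀ x y z a b c, P x y z a b c = Q x y a b * R z c) (x y z : Fin N) :
    corr3 P x y z = (∑ a, ∑ b, sgn a * sgn b * Q x y a b) * (∑ c, sgn c * R z c) := by
  simp only [corr3, hP, Fintype.sum_bool]; ring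

lemma corr3_prod2 {N : ℕ} {P : Fin N → Fin N → Fin N → Bool → Bool → Bool → ℝ}
    {Q : Fin N → Fin N → Bool → Bool → ℝ} {R : Fin N → Bool → ℝ}
    (hP : ∀ x y z a b c, P x y z a b c = Q y z b c * R x a) (x y z : Fin N) :
    corr3 P x y z = (∑ b, ∑ c, sgn b * sgn c * Q y z b c) * (∑ a, sgn a * R x a) := by
  simp only [corr3, hP, Fintype.sum_bool]; ring

lemma corr3_prod3 {N : ℕ} {P : Fin N → Fin N → Fin N → Bool → Bool → Bool → ℝ}
    {Q : Fin N → Fin N → Bool → Bool → ℝ} {R : Fin N → Bool → ℝ}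
    (hP : ∀ x y z a b c, P x y z a b c = Q x z a c * R y b) (x y z : Fin N) :
    corr3 P x y z = (∑ a, ∑ c, sgn a * sgn c * Q x z a c) * (∑ b, sgn b * R y b) := by
  simp only [corr3, hP, Fintype.sum_bool]; ring

lemma corr2_abs_le {N : ℕ} {Q : Fin N → Fin N → Bool → Bool → ℝ} (hQ : IsBeh2 Q)
    (x y : Fin N) : |∑ a, ∑ b, sgn a * sgn b * Q x y a b| ≤ 1 := by
  have h := hQ.2 x y
  have h0 := fun a b => hQ.1 x y a b
  simp only [Fintype.sum_bool, sgn] at h ⊢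
  rw [abs_le]
  constructor <;> norm_num <;>
    nlinarith [h0 true true, h0 true false, h0 false true, h0 false false]

lemma corr1_abs_le {N : ℕ} {R : Fin N → Bool → ℝ} (hR : IsBeh1 R) (z : Fin N) :
    |∑ a, sgn a * R z a| ≤ 1 := by
  have h := hR.2 z
  have h0 := fun a => hR.1 z a
  simp only [Fintype.sum_bool, sgn] at h ⊢
  rw [abs_le]
  constructor <;> norm_num <;> nlinarith [h0 true, h0 false]

lemma beh2_of_corr {N : ℕ} (α : Fin N → Fin N → ℝ) (hα : ∀ x y, |α x y| ≤ 1) :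
    IsBeh2 (fun x y a b => (1 + sgn a * sgn b * α x y) / 4) ∧
    ∀ x y, (∑ a, ∑ b, sgn a * sgn b * ((1 + sgn a * sgn b * α x y) / 4)) = α x y := by
  refine ⟨⟨fun x y a b => ?_, fun x y => ?_⟩, fun x y => ?_⟩
  · have := abs_le.mp (hα x y)
    cases a <;> cases b <;> simp [sgn] <;> linarith [this.1, this.2]
  · simp [Fintype.sum_bool, sgn]; ring
  · simp [Fintype.sum_bool, sgn]; ring

lemma beh1_of_corr {N : ℕ} (c : Fin N → ℝ) (hc : ∀ z, |c z| ≤ 1) :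
    IsBeh1 (fun z a => (1 + sgn a * c z) / 2) ∧
    ∀ z, (∑ a, sgn a * ((1 + sgn a * c z) / 2)) = c z := by
  refine ⟨⟨fun z a => ?_, fun z => ?_⟩, fun z => ?_⟩
  · have := abs_le.mp (hc z)
    cases a <;> simp [sgn] <;> linarith [this.1, this.2]
  · simp [Fintype.sum_bool, sgn]; ring
  · simp [Fintype.sum_bool, sgn]; ring

lemma PM1.abs_le {N : ℕ} {c : Fin N → ℝ} (hc : PM1 c) : ∀ z, |c z| ≤ 1 := by
  intro z; rcases hc z with h | h <;> rw [h] <;> norm_num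

/-- a tripartite correlation `γ` is the correlation of a general bilocal
tripartite behaviour with 2 outputs (±1) per party if and only if `γ` lies in the convex
hull of the tensors of the three forms `(α_{xy} c_z)`, `(β_{yz} a_x)`, `(δ_{xz} b_y)`,
where the bipartite factors have entries of absolute value at most 1 and the single-party
factors are ±1-valued. -/

theorem unbounded_bell_stmt2 {N : ℕ} (γ : Fin N → Fin N → Fin N → ℝ) :
    (∃ P, GenBiloc3 P ∧ ∀ x y z, corr3 P x y z = γ x y z)
      ↔ γ ∈ convexHull ℝ (BilocCorrGenerators N) := by
  constructor
  · rintro ⟨P, ⟨m, p, Ps, hp0, hp1, hbt, hPdef⟩, hcorr⟩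
    have hγ : γ = ∑ j : Fin m, p j • corr3 (Ps j) := by
      funext x y z
      rw [← hcorr x y z]
      have hPe : P = fun x y z a b c => ∑ j, p j * Ps j x y z a b c := by
        funext x y z a b c; exact hPdef x y z a b c
      rw [hPe, corr3_sum]
      simp [Finset.sum_apply]
    rw [hγ]
    refine Convex.sum_mem (convex_convexHull ℝ _) (fun j _ => hp0 j) hp1 ?_
    intro j _
    rcases hbt j with ⟨Q, R, hQ, hR, hP⟩ | ⟨Q, R, hQ, hR, hP⟩ | ⟨Q, R, hQ, hR, hP⟩
    · have heq : corr3 (Ps j) =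
          Lxy (fun x y => ∑ a, ∑ b, sgn a * sgn b * Q x y a b)
            (fun z => ∑ c, sgn c * R z c) := by
        funext x y z; rw [corr3_prod1 hP]; rfl
      rw [heq]
      refine linmap_mem_hull _ (fun v hv => ?_) _ (fun z => corr1_abs_le hR z)
      exact Set.mem_union_left _ (Set.mem_union_left _
        ⟨_, v, fun x y => corr2_abs_le hQ x y, hv, fun x y z => rfl⟩)
    · have heq : corr3 (Ps j) =
          Lyz (fun y z => ∑ b, ∑ c, sgn b * sgn c * Q y z b c)
            (fun x => ∑ a, sgn a * R x a) := by
        funext x y z; rw [corr3_prod2 hP]; rfl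
      rw [heq]
      refine linmap_mem_hull _ (fun v hv => ?_) _ (fun x => corr1_abs_le hR x)
      exact Set.mem_union_left _ (Set.mem_union_right _
        ⟨_, v, fun y z => corr2_abs_le hQ y z, hv, fun x y z => rfl⟩)
    · have heq : corr3 (Ps j) =
          Lxz (fun x z => ∑ a, ∑ c, sgn a * sgn c * Q x z a c)
            (fun y => ∑ b, sgn b * R y b) := by
        funext x y z; rw [corr3_prod3 hP]; rfl
      rw [heq]
      refine linmap_mem_hull _ (fun v hv => ?_) _ (fun y => corr1_abs_le hR y)
      exact Set.mem_union_right _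
        ⟨_, v, fun x z => corr2_abs_le hQ x z, hv, fun x y z => rfl⟩
  · intro hγ
    obtain ⟨ι, hι, w, g, hw0, hw1, hgen, hx⟩ := mem_convexHull_iff_exists_fintype.mp hγ
    letI := hι
    have hreal : ∀ i, ∃ P, BilocTerm3 P ∧ ∀ x y z, corr3 P x y z = g i x y z := by
      intro i
      rcases hgen i with (h | h) | h
      · obtain ⟨α, c, hα, hc, hdef⟩ := h
        obtain ⟨hQ, hQc⟩ := beh2_of_corr α hα
        obtain ⟨hR, hRc⟩ := beh1_of_corr c hc.abs_le
        refine ⟨fun x y z a b cc =>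
          ((1 + sgn a * sgn b * α x y) / 4) * ((1 + sgn cc * c z) / 2),
          Or.inl ⟨_, _, hQ, hR, fun _ _ _ _ _ _ => rfl⟩, fun x y z => ?_⟩
        rw [corr3_prod1 (fun _ _ _ _ _ _ => rfl), hQc, hRc, hdef]
      · obtain ⟨β, a, hβ, ha, hdef⟩ := h
        obtain ⟨hQ, hQc⟩ := beh2_of_corr β hβ
        obtain ⟨hR, hRc⟩ := beh1_of_corr a ha.abs_le
        refine ⟨fun x y z aa b c =>
          ((1 + sgn b * sgn c * β y z) / 4) * ((1 + sgn aa * a x) / 2),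
          Or.inr (Or.inl ⟨_, _, hQ, hR, fun _ _ _ _ _ _ => rfl⟩), fun x y z => ?_⟩
        rw [corr3_prod2 (fun _ _ _ _ _ _ => rfl), hQc, hRc, hdef]
      · obtain ⟨δ, b, hδ, hb, hdef⟩ := h
        obtain ⟨hQ, hQc⟩ := beh2_of_corr δ hδ
        obtain ⟨hR, hRc⟩ := beh1_of_corr b hb.abs_le
        refine ⟨fun x y z a bb c =>
          ((1 + sgn a * sgn c * δ x z) / 4) * ((1 + sgn bb * b y) / 2),
          Or.inr (Or.inr ⟨_, _, hQ, hR, fun _ _ _ _ _ _ => rfl⟩), fun x y z => ?_⟩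
        rw [corr3_prod3 (fun _ _ _ _ _ _ => rfl), hQc, hRc, hdef]
    choose Ps hbt hcPs using hreal
    set e : Fin (Fintype.card ι) ≃ ι := (Fintype.equivFin ι).symm with he
    refine ⟨fun x y z a b c => ∑ j, w (e j) * Ps (e j) x y z a b c,
      ⟨Fintype.card ι, fun j => w (e j), fun j => Ps (e j),
        fun j => hw0 _, ?_, fun j => hbt _, fun _ _ _ _ _ _ => rfl⟩, ?_⟩
    · rw [Equiv.sum_comp e]; exact hw1
    · intro x y z
      rw [corr3_sum]
      have hxe := congrFun (congrFun (congrFun hx x) y) z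
      simp only [Finset.sum_apply, Pi.smul_apply, smul_eq_mul] at hxe
      rw [← hxe, ← Equiv.sum_comp e (fun i => w i * g i x y z)]
      exact Finset.sum_congr rfl fun j _ => by rw [hcPs]

end BellCorr
end
end

section
/- There exists a universal constant C > 0 such that for every N ≥ 1 and every tripartite Bell functional M = (M_{xyz})_{x,y,z=1}^N, the supremum of |∑_{x,y,z} M_{xyz} γ_{xyz}| over tripartite quantum correlations γ with N inputs per party is at most C times the supremum of |∑_{x,y,z} M_{xyz} δ_{xyz}| over tripartite general bilocal correlations δ with N inputs per party. In particular LV(Q³_cor(N), BL³_cor(N)) is bounded uniformly in N. -/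
open scoped BigOperators
open Kronecker

noncomputable section

namespace BellCorr

lemma sgn_mul_self (b : Bool) : sgn b * sgn b = 1 := by cases b <;> simp [sgn]

lemma sgn_not (b : Bool) : sgn (!b) = - sgn b := by cases b <;> simp [sgn]

lemma abs_sgn_le (b : Bool) : |sgn b| ≤ 1 := by cases b <;> simp [sgn]

/-- Rademacher variable. -/
def Xr {n : ℕ} (u : Fin n → ℝ) (ω : Fin n → Bool) : ℝ := ∑ k, u k * sgn (ω k)

lemma sum_sgn_mul_sgn {n : ℕ} {i j : Fin n} (h : i ≠ j) :
    ∑ ω : Fin n → Bool, sgn (ω i) * sgn (ω j) = 0 := by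
  have hinv : Function.Involutive (fun ω : Fin n → Bool => Function.update ω i (!ω i)) := by
    intro ω
    funext k
    by_cases hk : k = i
    · subst hk; simp
    · simp [Function.update_of_ne hk]
  have hbij := hinv.bijective
  have key : ∑ ω : Fin n → Bool, sgn (ω i) * sgn (ω j)
      = ∑ ω : Fin n → Bool, -(sgn (ω i) * sgn (ω j)) := by
    have := Fintype.sum_bijective _ hbij
      (fun ω : Fin n → Bool => -(sgn (ω i) * sgn (ω j)))
      (fun ω : Fin n → Bool => sgn (ω i) * sgn (ω j))
      (by
        intro ω
        simp only [Function.update_self, Function.update_of_ne (Ne.symm h) ]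
        rw [sgn_not]; ring)
    linarith [this]
  have : (2:ℝ) * ∑ ω : Fin n → Bool, sgn (ω i) * sgn (ω j) = 0 := by
    rw [Finset.sum_neg_distrib] at key
    linarith
  linarith

lemma sum_X_mul_X {n : ℕ} (u v : Fin n → ℝ) :
    ∑ ω : Fin n → Bool, Xr u ω * Xr v ω = 2^n * ∑ k, u k * v k := by
  have hcard : (Fintype.card (Fin n → Bool) : ℝ) = 2^n := by
    simp [Fintype.card_fun]
  calc ∑ ω : Fin n → Bool, Xr u ω * Xr v ω
      = ∑ ω : Fin n → Bool, ∑ k, ∑ l, (u k * v l) * (sgn (ω k) * sgn (ω l)) := by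
        apply Finset.sum_congr rfl; intro ω _
        rw [Xr, Xr, Finset.sum_mul_sum]
        apply Finset.sum_congr rfl; intro k _
        apply Finset.sum_congr rfl; intro l _; ring
    _ = ∑ k, ∑ l, (u k * v l) * ∑ ω : Fin n → Bool, sgn (ω k) * sgn (ω l) := by
        rw [Finset.sum_comm]
        apply Finset.sum_congr rfl; intro k _
        rw [Finset.sum_comm]
        apply Finset.sum_congr rfl; intro l _
        rw [Finset.mul_sum]
    _ = ∑ k, (u k * v k) * 2^n := by
        apply Finset.sum_congr rfl; intro k _
        rw [Finset.sum_eq_single k]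
        · have : ∑ ω : Fin n → Bool, sgn (ω k) * sgn (ω k) = 2^n := by
            calc ∑ ω : Fin n → Bool, sgn (ω k) * sgn (ω k)
                = ∑ _ω : Fin n → Bool, (1:ℝ) := by
                  apply Finset.sum_congr rfl; intro ω _; exact sgn_mul_self _
              _ = 2^n := by rw [Finset.sum_const]; simp [Fintype.card_fun]
          rw [this]
        · intro l _ hl
          rw [sum_sgn_mul_sgn (Ne.symm hl)]
          ring
        · intro h; exact absurd (Finset.mem_univ k) h
    _ = 2^n * ∑ k, u k * v k := by rw [← Finset.sum_mul]; ring

lemma sum_pi_succ {n : ℕ} (F : (Fin (n+1) → Bool) → ℝ) :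
    ∑ ω, F ω = ∑ b : Bool, ∑ τ : Fin n → Bool, F (Fin.cons b τ) := by
  calc ∑ ω, F ω = ∑ p : Bool × (Fin n → Bool), F (Fin.cons p.1 p.2) :=
      Fintype.sum_equiv (Fin.consEquiv (fun _ => Bool)).symm _ _
        (fun ω => by simp [Fin.consEquiv, Fin.cons_self_tail])
    _ = ∑ b : Bool, ∑ τ : Fin n → Bool, F (Fin.cons b τ) :=
      Fintype.sum_prod_type (f := fun p : Bool × (Fin n → Bool) => F (Fin.cons p.1 p.2))

lemma Xr_cons {n : ℕ} (u : Fin (n+1) → ℝ) (b : Bool) (τ : Fin n → Bool) :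
    Xr u (Fin.cons b τ) = u 0 * sgn b + Xr (fun k => u k.succ) τ := by
  rw [Xr, Fin.sum_univ_succ]
  simp [Xr]

lemma sum_X_pow_four {n : ℕ} (u : Fin n → ℝ) :
    ∑ ω : Fin n → Bool, (Xr u ω)^4 ≤ 3 * 2^n * (∑ k, (u k)^2)^2 := by
  induction n with
  | zero =>
    simp [Xr]
  | succ n ih =>
    rw [sum_pi_succ]
    set a := u 0 with ha
    set w : Fin n → ℝ := fun k => u k.succ with hw
    have hX2 : ∑ τ : Fin n → Bool, (Xr w τ)^2 = 2^n * ∑ k, (w k)^2 := by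
      have := sum_X_mul_X w w
      calc ∑ τ : Fin n → Bool, (Xr w τ)^2 = ∑ τ : Fin n → Bool, Xr w τ * Xr w τ := by
            apply Finset.sum_congr rfl; intro τ _; ring
        _ = 2^n * ∑ k, w k * w k := this
        _ = 2^n * ∑ k, (w k)^2 := by
            congr 1; apply Finset.sum_congr rfl; intro k _; ring
    have hexp : ∀ τ : Fin n → Bool,
        ∑ b : Bool, (Xr u (Fin.cons b τ))^4
          = 2*a^4 + 12*a^2*(Xr w τ)^2 + 2*(Xr w τ)^4 := by
      intro τ
      have h1 : Xr u (Fin.cons true τ) = a + Xr w τ := by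
        rw [Xr_cons]; simp [sgn]; rfl
      have h2 : Xr u (Fin.cons false τ) = -a + Xr w τ := by
        rw [Xr_cons]; simp [sgn]; rfl
      rw [Fintype.sum_bool, h1, h2]; ring
    rw [Finset.sum_comm]
    have hsum : ∑ τ : Fin n → Bool, ∑ b : Bool, (Xr u (Fin.cons b τ))^4
        = 2*a^4 * 2^n + 12*a^2*(2^n * ∑ k, (w k)^2) + 2*∑ τ : Fin n → Bool, (Xr w τ)^4 := by
      calc ∑ τ : Fin n → Bool, ∑ b : Bool, (Xr u (Fin.cons b τ))^4
          = ∑ τ : Fin n → Bool, (2*a^4 + 12*a^2*(Xr w τ)^2 + 2*(Xr w τ)^4) := by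
            exact Finset.sum_congr rfl (fun τ _ => hexp τ)
        _ = _ := by
            rw [Finset.sum_add_distrib, Finset.sum_add_distrib, Finset.sum_const,
              ← Finset.mul_sum, ← Finset.mul_sum, hX2]
            simp only [Finset.card_univ, Fintype.card_fun, Fintype.card_bool,
              Fintype.card_fin, nsmul_eq_mul]
            push_cast
            ring
    have hu2 : ∑ k, (u k)^2 = a^2 + ∑ k, (w k)^2 := by
      rw [Fin.sum_univ_succ]
    have hσ : (0:ℝ) ≤ ∑ k, (w k)^2 := Finset.sum_nonneg (fun k _ => sq_nonneg _)
    have h2n : (0:ℝ) < 2^n := by positivity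
    have hpow : (2:ℝ)^(n+1) = 2 * 2^n := by rw [pow_succ]; ring
    rw [hsum, hu2, hpow]
    nlinarith [ih w, hσ, h2n, mul_nonneg h2n.le (by positivity : (0:ℝ) ≤ a^4),
      mul_nonneg (mul_nonneg h2n.le (sq_nonneg a)) hσ]


/-- truncation at level 4 -/
def clamp (t : ℝ) : ℝ := max (-4) (min 4 t)

lemma clamp_cases (t : ℝ) :
    (-4 ≤ t ∧ t ≤ 4 ∧ clamp t = t) ∨ (4 < t ∧ clamp t = 4) ∨ (t < -4 ∧ clamp t = -4) := by
  rcases le_or_gt t 4 with h1 | h1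
  · rcases le_or_gt (-4) t with h2 | h2
    · exact Or.inl ⟨h2, h1, by rw [clamp, min_eq_right h1, max_eq_right h2]⟩
    · refine Or.inr (Or.inr ⟨h2, ?_⟩)
      rw [clamp, min_eq_right h1, max_eq_left h2.le]
  · refine Or.inr (Or.inl ⟨h1, ?_⟩)
    rw [clamp, min_eq_left h1.le, max_eq_right (by norm_num)]

lemma abs_clamp_le (t : ℝ) : |clamp t| ≤ 4 := by
  rcases clamp_cases t with ⟨h1, h2, h3⟩ | ⟨h1, h3⟩ | ⟨h1, h3⟩ <;> rw [h3, abs_le] <;>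
    constructor <;> linarith

lemma clamp_sq_le (t : ℝ) : (clamp t)^2 ≤ t^2 := by
  rcases clamp_cases t with ⟨h1, h2, h3⟩ | ⟨h1, h3⟩ | ⟨h1, h3⟩ <;> rw [h3] <;> nlinarith

lemma rem_sq_le (t : ℝ) : (t - clamp t)^2 ≤ t^4 / 16 := by
  rcases clamp_cases t with ⟨h1, h2, h3⟩ | ⟨h1, h3⟩ | ⟨h1, h3⟩ <;> rw [h3] <;> nlinarith [sq_nonneg t, sq_nonneg (t^2 - 4*t), sq_nonneg (t^2 + 4*t)]


section GK
variable {ι κ : Type} [Fintype ι] [Fintype κ]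

/-- key iteration bound. -/
lemma key_bound (M : ι → κ → ℝ) (L K : ℝ)
    (hL : ∀ (a : ι → ℝ) (b : κ → ℝ), (∀ i, |a i| ≤ 1) → (∀ j, |b j| ≤ 1) →
      |∑ i, ∑ j, M i j * (a i * b j)| ≤ L)
    (hK : ∀ (m : ℕ) (p : ι → Fin m → ℝ) (q : κ → Fin m → ℝ),
      (∀ i, ∑ k, (p i k)^2 ≤ 1) → (∀ j, ∑ k, (q j k)^2 ≤ 1) →
      |∑ i, ∑ j, M i j * (∑ k, p i k * q j k)| ≤ K)
    {n : ℕ} (u : ι → Fin n → ℝ) (v : κ → Fin n → ℝ)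
    (hu : ∀ i, ∑ k, (u i k)^2 ≤ 1) (hv : ∀ j, ∑ k, (v j k)^2 ≤ 1) :
    |∑ i, ∑ j, M i j * (∑ k, u i k * v j k)| ≤ 16 * L + (Real.sqrt 3 / 2) * K := by
  classical
  set P : ℝ := 2^n with hP
  have hP0 : (0:ℝ) < P := by positivity
  set s : ℝ := Real.sqrt P with hs
  have hs0 : (0:ℝ) < s := Real.sqrt_pos.mpr hP0
  have hs2 : s^2 = P := Real.sq_sqrt hP0.le
  set δ : ℝ := Real.sqrt 3 / 4 with hδ
  have hδ0 : (0:ℝ) < δ := by positivity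
  have hδ2 : δ^2 = 3/16 := by
    rw [hδ, div_pow, Real.sq_sqrt (by norm_num : (0:ℝ) ≤ 3)]; norm_num
  -- the random variables
  set Xu : ι → (Fin n → Bool) → ℝ := fun i => Xr (u i) with hXu
  set Xv : κ → (Fin n → Bool) → ℝ := fun j => Xr (v j) with hXv
  -- second moments
  have hXu2 : ∀ i, ∑ ω : Fin n → Bool, (Xu i ω)^2 ≤ P := by
    intro i
    have h := sum_X_mul_X (u i) (u i)
    have : ∑ ω : Fin n → Bool, (Xu i ω)^2 = P * ∑ k, (u i k)^2 := by
      rw [hXu]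
      simp only []
      calc ∑ ω : Fin n → Bool, (Xr (u i) ω)^2 = ∑ ω : Fin n → Bool, Xr (u i) ω * Xr (u i) ω := by
            apply Finset.sum_congr rfl; intro ω _; ring
        _ = 2^n * ∑ k, u i k * u i k := h
        _ = P * ∑ k, (u i k)^2 := by rw [hP]; congr 1; apply Finset.sum_congr rfl; intro k _; ring
    rw [this]
    calc P * ∑ k, (u i k)^2 ≤ P * 1 := by
          apply mul_le_mul_of_nonneg_left (hu i) hP0.le
      _ = P := by ring
  have hXv2 : ∀ j, ∑ ω : Fin n → Bool, (Xv j ω)^2 ≤ P := by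
    intro j
    have h := sum_X_mul_X (v j) (v j)
    have : ∑ ω : Fin n → Bool, (Xv j ω)^2 = P * ∑ k, (v j k)^2 := by
      calc ∑ ω : Fin n → Bool, (Xv j ω)^2 = ∑ ω : Fin n → Bool, Xr (v j) ω * Xr (v j) ω := by
            apply Finset.sum_congr rfl; intro ω _; ring
        _ = 2^n * ∑ k, v j k * v j k := h
        _ = P * ∑ k, (v j k)^2 := by rw [hP]; congr 1; apply Finset.sum_congr rfl; intro k _; ring
    rw [this]
    calc P * ∑ k, (v j k)^2 ≤ P * 1 := by
          apply mul_le_mul_of_nonneg_left (hv j) hP0.le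
      _ = P := by ring
  -- remainder second moments
  have hru : ∀ i, ∑ ω : Fin n → Bool, (Xu i ω - clamp (Xu i ω))^2 ≤ P * δ^2 := by
    intro i
    calc ∑ ω : Fin n → Bool, (Xu i ω - clamp (Xu i ω))^2
        ≤ ∑ ω : Fin n → Bool, (Xu i ω)^4 / 16 :=
          Finset.sum_le_sum (fun ω _ => rem_sq_le _)
      _ = (∑ ω : Fin n → Bool, (Xu i ω)^4) / 16 := by rw [Finset.sum_div]
      _ ≤ (3 * 2^n * (∑ k, (u i k)^2)^2) / 16 := by
          apply div_le_div_of_nonneg_right (sum_X_pow_four (u i)) (by norm_num)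
      _ ≤ (3 * 2^n * 1) / 16 := by
          have h1 : (∑ k, (u i k)^2)^2 ≤ 1 := by
            have h0 : (0:ℝ) ≤ ∑ k, (u i k)^2 := Finset.sum_nonneg (fun k _ => sq_nonneg _)
            nlinarith [hu i]
          have : (0:ℝ) ≤ 3 * 2^n := by positivity
          nlinarith
      _ = P * δ^2 := by rw [hδ2, hP]; ring
  have hrv : ∀ j, ∑ ω : Fin n → Bool, (Xv j ω - clamp (Xv j ω))^2 ≤ P * δ^2 := by
    intro j
    calc ∑ ω : Fin n → Bool, (Xv j ω - clamp (Xv j ω))^2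
        ≤ ∑ ω : Fin n → Bool, (Xv j ω)^4 / 16 :=
          Finset.sum_le_sum (fun ω _ => rem_sq_le _)
      _ = (∑ ω : Fin n → Bool, (Xv j ω)^4) / 16 := by rw [Finset.sum_div]
      _ ≤ (3 * 2^n * (∑ k, (v j k)^2)^2) / 16 := by
          apply div_le_div_of_nonneg_right (sum_X_pow_four (v j)) (by norm_num)
      _ ≤ (3 * 2^n * 1) / 16 := by
          have h1 : (∑ k, (v j k)^2)^2 ≤ 1 := by
            have h0 : (0:ℝ) ≤ ∑ k, (v j k)^2 := Finset.sum_nonneg (fun k _ => sq_nonneg _)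
            nlinarith [hv j]
          have : (0:ℝ) ≤ 3 * 2^n := by positivity
          nlinarith
      _ = P * δ^2 := by rw [hδ2, hP]; ring
  -- nonnegativity of L and K
  have hL0 : (0:ℝ) ≤ L := by
    have := hL (fun _ => 0) (fun _ => 0) (fun i => by norm_num) (fun j => by norm_num)
    simpa using this
  have hK0 : (0:ℝ) ≤ K := by
    have := hK 0 (fun _ => (fun k => 0)) (fun _ => (fun k => 0))
      (fun i => by simp) (fun j => by simp)
    simpa using this
  -- swap-sums helper
  have swap_sum : ∀ F : ι → κ → (Fin n → Bool) → ℝ,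
      ∑ i, ∑ j, M i j * ∑ ω, F i j ω
        = ∑ ω : Fin n → Bool, ∑ i, ∑ j, M i j * F i j ω := by
    intro F
    calc ∑ i, ∑ j, M i j * ∑ ω, F i j ω
        = ∑ i, ∑ j, ∑ ω, M i j * F i j ω := by
          apply Finset.sum_congr rfl; intro i _
          apply Finset.sum_congr rfl; intro j _
          rw [Finset.mul_sum]
      _ = ∑ i, ∑ ω : Fin n → Bool, ∑ j, M i j * F i j ω := by
          apply Finset.sum_congr rfl; intro i _
          rw [Finset.sum_comm]
      _ = ∑ ω : Fin n → Bool, ∑ i, ∑ j, M i j * F i j ω := Finset.sum_comm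
  -- the three terms
  set T1 : ℝ := ∑ i, ∑ j, M i j * ∑ ω, clamp (Xu i ω) * clamp (Xv j ω) with hT1
  set T2 : ℝ := ∑ i, ∑ j, M i j * ∑ ω, clamp (Xu i ω) * (Xv j ω - clamp (Xv j ω)) with hT2
  set T3 : ℝ := ∑ i, ∑ j, M i j * ∑ ω, (Xu i ω - clamp (Xu i ω)) * Xv j ω with hT3
  have hdecomp : P * (∑ i, ∑ j, M i j * (∑ k, u i k * v j k)) = T1 + T2 + T3 := by
    have hij : ∀ i j, P * (∑ k, u i k * v j k)
        = (∑ ω, clamp (Xu i ω) * clamp (Xv j ω))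
          + (∑ ω, clamp (Xu i ω) * (Xv j ω - clamp (Xv j ω)))
          + (∑ ω, (Xu i ω - clamp (Xu i ω)) * Xv j ω) := by
      intro i j
      have h1 := sum_X_mul_X (u i) (v j)
      calc P * (∑ k, u i k * v j k) = ∑ ω : Fin n → Bool, Xu i ω * Xv j ω := by
            rw [hP]; exact h1.symm
        _ = ∑ ω : Fin n → Bool, (clamp (Xu i ω) * clamp (Xv j ω)
              + clamp (Xu i ω) * (Xv j ω - clamp (Xv j ω))
              + (Xu i ω - clamp (Xu i ω)) * Xv j ω) := by
            apply Finset.sum_congr rfl; intro ω _; ring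
        _ = _ := by rw [Finset.sum_add_distrib, Finset.sum_add_distrib]
    calc P * (∑ i, ∑ j, M i j * (∑ k, u i k * v j k))
        = ∑ i, ∑ j, (M i j * ∑ ω : Fin n → Bool, clamp (Xu i ω) * clamp (Xv j ω)
            + M i j * ∑ ω : Fin n → Bool, clamp (Xu i ω) * (Xv j ω - clamp (Xv j ω))
            + M i j * ∑ ω : Fin n → Bool, (Xu i ω - clamp (Xu i ω)) * Xv j ω) := by
          rw [Finset.mul_sum]
          apply Finset.sum_congr rfl; intro i _
          rw [Finset.mul_sum]
          apply Finset.sum_congr rfl; intro j _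
          calc P * (M i j * ∑ k, u i k * v j k)
              = M i j * (P * ∑ k, u i k * v j k) := by ring
            _ = _ := by rw [hij i j]; ring
      _ = T1 + T2 + T3 := by
          simp only [Finset.sum_add_distrib]; rfl
  -- bound on T1
  have hT1bd : |T1| ≤ P * (16 * L) := by
    rw [hT1, swap_sum]
    calc |∑ ω : Fin n → Bool, ∑ i, ∑ j, M i j * (clamp (Xu i ω) * clamp (Xv j ω))|
        ≤ ∑ ω : Fin n → Bool, |∑ i, ∑ j, M i j * (clamp (Xu i ω) * clamp (Xv j ω))| :=
          Finset.abs_sum_le_sum_abs _ _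
      _ ≤ ∑ _ω : Fin n → Bool, 16 * L := by
          apply Finset.sum_le_sum
          intro ω _
          have h := hL (fun i => clamp (Xu i ω) / 4) (fun j => clamp (Xv j ω) / 4)
            (fun i => by
              rw [abs_div]
              have := abs_clamp_le (Xu i ω)
              rw [abs_of_nonneg (by norm_num : (0:ℝ) ≤ 4)]
              linarith [div_le_one_of_le₀ this (by norm_num : (0:ℝ) ≤ 4)])
            (fun j => by
              rw [abs_div]
              have := abs_clamp_le (Xv j ω)
              rw [abs_of_nonneg (by norm_num : (0:ℝ) ≤ 4)]
              linarith [div_le_one_of_le₀ this (by norm_num : (0:ℝ) ≤ 4)])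
          have heq : ∑ i, ∑ j, M i j * (clamp (Xu i ω) * clamp (Xv j ω))
              = 16 * ∑ i, ∑ j, M i j * (clamp (Xu i ω) / 4 * (clamp (Xv j ω) / 4)) := by
            rw [Finset.mul_sum]
            apply Finset.sum_congr rfl; intro i _
            rw [Finset.mul_sum]
            apply Finset.sum_congr rfl; intro j _
            ring
          rw [heq, abs_mul, abs_of_nonneg (by norm_num : (0:ℝ) ≤ 16)]
          nlinarith [abs_nonneg (∑ i, ∑ j, M i j * (clamp (Xu i ω) / 4 * (clamp (Xv j ω) / 4)))]
      _ = P * (16 * L) := by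
          rw [Finset.sum_const]
          simp only [Finset.card_univ, Fintype.card_fun, Fintype.card_bool,
            Fintype.card_fin, nsmul_eq_mul, hP]
          push_cast
          ring
  -- reindexing equivalence
  set m' : ℕ := Fintype.card (Fin n → Bool) with hm'
  set e : Fin m' ≃ (Fin n → Bool) := (Fintype.equivFin (Fin n → Bool)).symm with he
  -- bound on T2
  have hT2bd : |T2| ≤ P * (δ * K) := by
    set p : ι → Fin m' → ℝ := fun i k => clamp (Xu i (e k)) / s with hp
    set q : κ → Fin m' → ℝ := fun j k => (Xv j (e k) - clamp (Xv j (e k))) / (s * δ) with hq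
    have hpn : ∀ i, ∑ k, (p i k)^2 ≤ 1 := by
      intro i
      have h1 : ∑ k, (p i k)^2 = (∑ ω : Fin n → Bool, (clamp (Xu i ω))^2) / P := by
        rw [hp]
        simp only [div_pow]
        rw [← Finset.sum_div, hs2]
        congr 1
        exact Equiv.sum_comp e (fun ω => (clamp (Xu i ω))^2)
      rw [h1, div_le_one hP0]
      calc ∑ ω : Fin n → Bool, (clamp (Xu i ω))^2 ≤ ∑ ω : Fin n → Bool, (Xu i ω)^2 :=
            Finset.sum_le_sum (fun ω _ => clamp_sq_le _)
        _ ≤ P := hXu2 i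
    have hqn : ∀ j, ∑ k, (q j k)^2 ≤ 1 := by
      intro j
      have h1 : ∑ k, (q j k)^2
          = (∑ ω : Fin n → Bool, (Xv j ω - clamp (Xv j ω))^2) / (P * δ^2) := by
        rw [hq]
        simp only [div_pow, mul_pow]
        rw [← Finset.sum_div, hs2]
        congr 1
        exact Equiv.sum_comp e (fun ω => (Xv j ω - clamp (Xv j ω))^2)
      rw [h1, div_le_one (by positivity)]
      exact hrv j
    have hdot : ∀ i j, ∑ ω : Fin n → Bool, clamp (Xu i ω) * (Xv j ω - clamp (Xv j ω))
        = (P * δ) * ∑ k, p i k * q j k := by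
      intro i j
      rw [Finset.mul_sum, ← Equiv.sum_comp e
        (fun ω => clamp (Xu i ω) * (Xv j ω - clamp (Xv j ω)))]
      apply Finset.sum_congr rfl; intro k _
      rw [hp, hq]
      simp only []
      rw [← hs2]
      field_simp
    have hval : T2 = (P * δ) * ∑ i, ∑ j, M i j * (∑ k, p i k * q j k) := by
      rw [hT2, Finset.mul_sum]
      apply Finset.sum_congr rfl; intro i _
      rw [Finset.mul_sum]
      apply Finset.sum_congr rfl; intro j _
      rw [hdot i j]; ring
    rw [hval, abs_mul, abs_of_nonneg (by positivity : (0:ℝ) ≤ P * δ)]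
    calc P * δ * |∑ i, ∑ j, M i j * (∑ k, p i k * q j k)| ≤ P * δ * K := by
          apply mul_le_mul_of_nonneg_left (hK m' p q hpn hqn) (by positivity)
      _ = P * (δ * K) := by ring
  -- bound on T3
  have hT3bd : |T3| ≤ P * (δ * K) := by
    set p : ι → Fin m' → ℝ := fun i k => (Xu i (e k) - clamp (Xu i (e k))) / (s * δ) with hp
    set q : κ → Fin m' → ℝ := fun j k => Xv j (e k) / s with hq
    have hpn : ∀ i, ∑ k, (p i k)^2 ≤ 1 := by
      intro i
      have h1 : ∑ k, (p i k)^2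
          = (∑ ω : Fin n → Bool, (Xu i ω - clamp (Xu i ω))^2) / (P * δ^2) := by
        rw [hp]
        simp only [div_pow, mul_pow]
        rw [← Finset.sum_div, hs2]
        congr 1
        exact Equiv.sum_comp e (fun ω => (Xu i ω - clamp (Xu i ω))^2)
      rw [h1, div_le_one (by positivity)]
      exact hru i
    have hqn : ∀ j, ∑ k, (q j k)^2 ≤ 1 := by
      intro j
      have h1 : ∑ k, (q j k)^2 = (∑ ω : Fin n → Bool, (Xv j ω)^2) / P := by
        rw [hq]
        simp only [div_pow]
        rw [← Finset.sum_div, hs2]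
        congr 1
        exact Equiv.sum_comp e (fun ω => (Xv j ω)^2)
      rw [h1, div_le_one hP0]
      exact hXv2 j
    have hdot : ∀ i j, ∑ ω : Fin n → Bool, (Xu i ω - clamp (Xu i ω)) * Xv j ω
        = (P * δ) * ∑ k, p i k * q j k := by
      intro i j
      rw [Finset.mul_sum, ← Equiv.sum_comp e
        (fun ω => (Xu i ω - clamp (Xu i ω)) * Xv j ω)]
      apply Finset.sum_congr rfl; intro k _
      rw [hp, hq]
      simp only []
      rw [← hs2]
      field_simp
    have hval : T3 = (P * δ) * ∑ i, ∑ j, M i j * (∑ k, p i k * q j k) := by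
      rw [hT3, Finset.mul_sum]
      apply Finset.sum_congr rfl; intro i _
      rw [Finset.mul_sum]
      apply Finset.sum_congr rfl; intro j _
      rw [hdot i j]; ring
    rw [hval, abs_mul, abs_of_nonneg (by positivity : (0:ℝ) ≤ P * δ)]
    calc P * δ * |∑ i, ∑ j, M i j * (∑ k, p i k * q j k)| ≤ P * δ * K := by
          apply mul_le_mul_of_nonneg_left (hK m' p q hpn hqn) (by positivity)
      _ = P * (δ * K) := by ring
  -- combine
  have habs : |P * (∑ i, ∑ j, M i j * (∑ k, u i k * v j k))| ≤ P * (16 * L + 2 * (δ * K)) := by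
    rw [hdecomp]
    calc |T1 + T2 + T3| ≤ |T1| + |T2| + |T3| := by
          have := abs_add_le (T1 + T2) T3
          have := abs_add_le T1 T2
          linarith [abs_add_le (T1 + T2) T3, abs_add_le T1 T2]
      _ ≤ P * (16 * L) + P * (δ * K) + P * (δ * K) := by linarith
      _ = P * (16 * L + 2 * (δ * K)) := by ring
  rw [abs_mul, abs_of_pos hP0] at habs
  have hfin := le_of_mul_le_mul_left (by linarith [habs] :
    P * |∑ i, ∑ j, M i j * (∑ k, u i k * v j k)| ≤ P * (16 * L + 2 * (δ * K))) hP0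
  calc |∑ i, ∑ j, M i j * (∑ k, u i k * v j k)| ≤ 16 * L + 2 * (δ * K) := hfin
    _ = 16 * L + (Real.sqrt 3 / 2) * K := by rw [hδ]; ring


lemma sqrt3_lt_two : Real.sqrt 3 < 2 := by
  nlinarith [Real.sq_sqrt (show (0:ℝ) ≤ 3 by norm_num), Real.sqrt_nonneg 3]

/-- Grothendieck's inequality (real, finite-dimensional, constant 32/(2-√3)). -/
lemma grothendieck (M : ι → κ → ℝ) (L : ℝ)
    (hL : ∀ (a : ι → ℝ) (b : κ → ℝ), (∀ i, |a i| ≤ 1) → (∀ j, |b j| ≤ 1) →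
      |∑ i, ∑ j, M i j * (a i * b j)| ≤ L)
    {n : ℕ} (u : ι → Fin n → ℝ) (v : κ → Fin n → ℝ)
    (hu : ∀ i, ∑ k, (u i k)^2 ≤ 1) (hv : ∀ j, ∑ k, (v j k)^2 ≤ 1) :
    |∑ i, ∑ j, M i j * (∑ k, u i k * v j k)| ≤ (32 / (2 - Real.sqrt 3)) * L := by
  classical
  set S : Set ℝ := {t : ℝ | ∃ (m : ℕ) (p : ι → Fin m → ℝ) (q : κ → Fin m → ℝ),
    (∀ i, ∑ k, (p i k)^2 ≤ 1) ∧ (∀ j, ∑ k, (q j k)^2 ≤ 1) ∧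
    t = |∑ i, ∑ j, M i j * (∑ k, p i k * q j k)|} with hS
  have hbdd : BddAbove S := by
    refine ⟨∑ i, ∑ j, |M i j|, ?_⟩
    rintro t ⟨m, p, q, hp, hq, rfl⟩
    calc |∑ i, ∑ j, M i j * (∑ k, p i k * q j k)|
        ≤ ∑ i, |∑ j, M i j * (∑ k, p i k * q j k)| := Finset.abs_sum_le_sum_abs _ _
      _ ≤ ∑ i, ∑ j, |M i j * (∑ k, p i k * q j k)| :=
          Finset.sum_le_sum (fun i _ => Finset.abs_sum_le_sum_abs _ _)
      _ ≤ ∑ i, ∑ j, |M i j| := by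
          apply Finset.sum_le_sum; intro i _
          apply Finset.sum_le_sum; intro j _
          rw [abs_mul]
          have hdot : |∑ k, p i k * q j k| ≤ 1 := by
            have hcs := Finset.sum_mul_sq_le_sq_mul_sq Finset.univ (p i) (q j)
            have h1 : (∑ k, p i k * q j k)^2 ≤ 1 := by
              have hp0 : (0:ℝ) ≤ ∑ k, (p i k)^2 := Finset.sum_nonneg (fun k _ => sq_nonneg _)
              have hq0 : (0:ℝ) ≤ ∑ k, (q j k)^2 := Finset.sum_nonneg (fun k _ => sq_nonneg _)
              nlinarith [hp i, hq j]
            nlinarith [abs_nonneg (∑ k, p i k * q j k), sq_abs (∑ k, p i k * q j k)]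
          nlinarith [abs_nonneg (M i j), hdot]
  have hmem0 : (0:ℝ) ∈ S := by
    refine ⟨0, (fun _ _ => 0), (fun _ _ => 0), ?_, ?_, ?_⟩ <;> simp
  set K : ℝ := sSup S with hKdef
  have hK0 : 0 ≤ K := le_csSup hbdd hmem0
  have hL0 : 0 ≤ L := by
    have := hL (fun _ => 0) (fun _ => 0) (fun i => by norm_num) (fun j => by norm_num)
    simpa using this
  have hKb : ∀ (m : ℕ) (p : ι → Fin m → ℝ) (q : κ → Fin m → ℝ),
      (∀ i, ∑ k, (p i k)^2 ≤ 1) → (∀ j, ∑ k, (q j k)^2 ≤ 1) →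
      |∑ i, ∑ j, M i j * (∑ k, p i k * q j k)| ≤ K :=
    fun m p q hp hq => le_csSup hbdd ⟨m, p, q, hp, hq, rfl⟩
  have hiter : K ≤ 16 * L + (Real.sqrt 3 / 2) * K := by
    apply Real.sSup_le
    · rintro t ⟨m, p, q, hp, hq, rfl⟩
      exact key_bound M L K hL hKb p q hp hq
    · positivity
  have h2m : (0:ℝ) < 2 - Real.sqrt 3 := by linarith [sqrt3_lt_two]
  have hKfin : K ≤ (32 / (2 - Real.sqrt 3)) * L := by
    rw [div_mul_eq_mul_div, le_div_iff₀ h2m]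
    nlinarith [hiter]
  exact le_trans (hKb n u v hu hv) hKfin

end GK


lemma herm_conj {d : ℕ} {A : Matrix (Fin d) (Fin d) ℂ} (hA : A.IsHermitian) (i i' : Fin d) :
    (starRingEnd ℂ) (A i i') = A i' i := by
  have h := congrFun (congrFun hA.eq i') i
  simpa [Matrix.conjTranspose_apply] using h

/-- Move a Hermitian operator acting on the first factor to the left side of the
inner product. -/
lemma herm_shift {d : ℕ} {E : Type} [Fintype E] (A : Matrix (Fin d) (Fin d) ℂ)
    (hA : A.IsHermitian) (D : Matrix E E ℂ) (ψ : Fin d × E → ℂ) :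
    ∑ p : Fin d × E, ∑ p' : Fin d × E,
        (starRingEnd ℂ) (ψ p) * (A p.1 p'.1 * D p.2 p'.2) * ψ p'
      = ∑ p : Fin d × E, (starRingEnd ℂ) (∑ i', A p.1 i' * ψ (i', p.2))
          * (∑ e', D p.2 e' * ψ (p.1, e')) := by
  have hconj : ∀ (i : Fin d) (e : E),
      (starRingEnd ℂ) (∑ i', A i i' * ψ (i', e))
        = ∑ i', A i' i * (starRingEnd ℂ) (ψ (i', e)) := by
    intro i e
    rw [map_sum]
    apply Finset.sum_congr rfl; intro i' _
    rw [map_mul, herm_conj hA]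
  calc ∑ p : Fin d × E, ∑ p' : Fin d × E,
        (starRingEnd ℂ) (ψ p) * (A p.1 p'.1 * D p.2 p'.2) * ψ p'
      = ∑ i, ∑ e, ∑ i', ∑ e',
          (starRingEnd ℂ) (ψ (i,e)) * (A i i' * D e e') * ψ (i',e') := by
        simp only [Fintype.sum_prod_type]
    _ = ∑ i, ∑ i', ∑ e, ∑ e',
          (starRingEnd ℂ) (ψ (i,e)) * (A i i' * D e e') * ψ (i',e') := by
        apply Finset.sum_congr rfl; intro i _
        exact Finset.sum_comm
    _ = ∑ i', ∑ i, ∑ e, ∑ e',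
          (starRingEnd ℂ) (ψ (i,e)) * (A i i' * D e e') * ψ (i',e') := Finset.sum_comm
    _ = ∑ i, ∑ e, (∑ i', A i' i * (starRingEnd ℂ) (ψ (i', e))) * (∑ e', D e e' * ψ (i, e')) := by
        apply Finset.sum_congr rfl; intro i _
        calc ∑ i', ∑ e, ∑ e',
              (starRingEnd ℂ) (ψ (i',e)) * (A i' i * D e e') * ψ (i,e')
            = ∑ e, ∑ i', ∑ e',
              (starRingEnd ℂ) (ψ (i',e)) * (A i' i * D e e') * ψ (i,e') := Finset.sum_comm
          _ = ∑ e, (∑ i', A i' i * (starRingEnd ℂ) (ψ (i', e))) * (∑ e', D e e' * ψ (i, e')) := by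
              apply Finset.sum_congr rfl; intro e _
              rw [Finset.sum_mul_sum]
              apply Finset.sum_congr rfl; intro i' _
              apply Finset.sum_congr rfl; intro e' _
              ring
    _ = ∑ p : Fin d × E, (starRingEnd ℂ) (∑ i', A p.1 i' * ψ (i', p.2))
          * (∑ e', D p.2 e' * ψ (p.1, e')) := by
        rw [Fintype.sum_prod_type]
        apply Finset.sum_congr rfl; intro i _
        apply Finset.sum_congr rfl; intro e _
        rw [hconj]

lemma quantum_vectors {N : ℕ} (γ : Fin N → Fin N → Fin N → ℝ) (h : IsQuantumCorr3 γ) :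
    ∃ (n : ℕ) (u : Fin N → Fin n → ℝ) (w : Fin N × Fin N → Fin n → ℝ),
      (∀ x, ∑ k, (u x k)^2 ≤ 1) ∧ (∀ p, ∑ k, (w p k)^2 ≤ 1) ∧
      ∀ x y z, γ x y z = ∑ k, u x k * w (y,z) k := by
  classical
  obtain ⟨d₁, d₂, d₃, ψ, A, B, C, hψ, hA, hB, hC, hγ⟩ := h
  set uC : Fin N → (Fin d₁ × Fin d₂ × Fin d₃) → ℂ := fun x p => ∑ i', A x p.1 i' * ψ (i', p.2) with huC
  set wC : Fin N → Fin N → (Fin d₁ × Fin d₂ × Fin d₃) → ℂ :=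
    fun y z p => ∑ e' : Fin d₂ × Fin d₃, (B y ⊗ₖ C z) p.2 e' * ψ (p.1, e') with hwC
  -- representation
  have hrep : ∀ x y z, ((γ x y z : ℝ) : ℂ)
      = ∑ p : Fin d₁ × Fin d₂ × Fin d₃, (starRingEnd ℂ) (uC x p) * wC y z p := by
    intro x y z
    calc ((γ x y z : ℝ) : ℂ)
        = ∑ i, ∑ j, (starRingEnd ℂ) (ψ i) * ((A x ⊗ₖ (B y ⊗ₖ C z)) i j) * ψ j := hγ x y z
      _ = ∑ p : Fin d₁ × Fin d₂ × Fin d₃, ∑ p' : Fin d₁ × Fin d₂ × Fin d₃, (starRingEnd ℂ) (ψ p)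
            * (A x p.1 p'.1 * (B y ⊗ₖ C z) p.2 p'.2) * ψ p' := by
          apply Finset.sum_congr rfl; intro p _
          apply Finset.sum_congr rfl; intro p' _
          rw [Matrix.kroneckerMap_apply]
      _ = ∑ p : Fin d₁ × Fin d₂ × Fin d₃, (starRingEnd ℂ) (uC x p) * wC y z p :=
          herm_shift (A x) (hA x).1 (B y ⊗ₖ C z) ψ
  -- norm of uC
  have hun : ∀ x, ∑ p : Fin d₁ × Fin d₂ × Fin d₃, Complex.normSq (uC x p) ≤ 1 := by
    intro x
    calc ∑ p : Fin d₁ × Fin d₂ × Fin d₃, Complex.normSq (uC x p)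
        = ∑ i, ∑ e : Fin d₂ × Fin d₃, Complex.normSq (∑ i', A x i i' * ψ (i', e)) := by
          rw [Fintype.sum_prod_type]
      _ = ∑ e : Fin d₂ × Fin d₃, ∑ i, Complex.normSq (∑ i', A x i i' * ψ (i', e)) :=
          Finset.sum_comm
      _ ≤ ∑ e : Fin d₂ × Fin d₃, ∑ i', Complex.normSq (ψ (i', e)) := by
          apply Finset.sum_le_sum; intro e _
          simpa [Matrix.mulVec, dotProduct] using (hA x).2 (fun i' => ψ (i', e))
      _ = ∑ i', ∑ e : Fin d₂ × Fin d₃, Complex.normSq (ψ (i', e)) := Finset.sum_comm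
      _ = ∑ p : Fin d₁ × Fin d₂ × Fin d₃, Complex.normSq (ψ p) := by
          simp only [Fintype.sum_prod_type]
      _ = 1 := hψ
  -- intermediate vector: C applied
  set ψC : Fin N → (Fin d₁ × Fin d₂ × Fin d₃) → ℂ :=
    fun z p => ∑ k', C z p.2.2 k' * ψ (p.1, (p.2.1, k')) with hψC
  have hψCn : ∀ z, ∑ p : Fin d₁ × Fin d₂ × Fin d₃, Complex.normSq (ψC z p) ≤ 1 := by
    intro z
    calc ∑ p : Fin d₁ × Fin d₂ × Fin d₃, Complex.normSq (ψC z p)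
        = ∑ i, ∑ j, ∑ k, Complex.normSq (∑ k', C z k k' * ψ (i, (j, k'))) := by
          simp only [Fintype.sum_prod_type]; rfl
      _ ≤ ∑ i, ∑ j, ∑ k', Complex.normSq (ψ (i, (j, k'))) := by
          apply Finset.sum_le_sum; intro i _
          apply Finset.sum_le_sum; intro j _
          simpa [Matrix.mulVec, dotProduct] using (hC z).2 (fun k' => ψ (i, (j, k')))
      _ = ∑ p : Fin d₁ × Fin d₂ × Fin d₃, Complex.normSq (ψ p) := by simp only [Fintype.sum_prod_type]
      _ = 1 := hψ
  have hwc : ∀ y z p, wC y z p = ∑ j', B y p.2.1 j' * ψC z (p.1, (j', p.2.2)) := by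
    intro y z p
    calc wC y z p
        = ∑ e' : Fin d₂ × Fin d₃, (B y p.2.1 e'.1 * C z p.2.2 e'.2) * ψ (p.1, e') := by
          apply Finset.sum_congr rfl; intro e' _
          rw [Matrix.kroneckerMap_apply]
      _ = ∑ j', ∑ k', (B y p.2.1 j' * C z p.2.2 k') * ψ (p.1, (j', k')) := by
          rw [Fintype.sum_prod_type]
      _ = ∑ j', B y p.2.1 j' * ψC z (p.1, (j', p.2.2)) := by
          apply Finset.sum_congr rfl; intro j' _
          rw [Finset.mul_sum]
          apply Finset.sum_congr rfl; intro k' _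
          ring
  have hwn : ∀ y z, ∑ p : Fin d₁ × Fin d₂ × Fin d₃, Complex.normSq (wC y z p) ≤ 1 := by
    intro y z
    calc ∑ p : Fin d₁ × Fin d₂ × Fin d₃, Complex.normSq (wC y z p)
        = ∑ i, ∑ j, ∑ k, Complex.normSq (∑ j', B y j j' * ψC z (i, (j', k))) := by
          simp only [hwc]
          simp only [Fintype.sum_prod_type]
      _ = ∑ i, ∑ k, ∑ j, Complex.normSq (∑ j', B y j j' * ψC z (i, (j', k))) := by
          apply Finset.sum_congr rfl; intro i _
          exact Finset.sum_comm
      _ ≤ ∑ i, ∑ k, ∑ j', Complex.normSq (ψC z (i, (j', k))) := by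
          apply Finset.sum_le_sum; intro i _
          apply Finset.sum_le_sum; intro k _
          simpa [Matrix.mulVec, dotProduct] using (hB y).2 (fun j' => ψC z (i, (j', k)))
      _ = ∑ i, ∑ j', ∑ k, Complex.normSq (ψC z (i, (j', k))) := by
          apply Finset.sum_congr rfl; intro i _
          exact Finset.sum_comm
      _ = ∑ p : Fin d₁ × Fin d₂ × Fin d₃, Complex.normSq (ψC z p) := by simp only [Fintype.sum_prod_type]
      _ ≤ 1 := hψCn z
  -- realification
  set n : ℕ := Fintype.card ((Fin d₁ × Fin d₂ × Fin d₃) ⊕ (Fin d₁ × Fin d₂ × Fin d₃)) with hn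
  set e : Fin n ≃ ((Fin d₁ × Fin d₂ × Fin d₃) ⊕ (Fin d₁ × Fin d₂ × Fin d₃)) := (Fintype.equivFin ((Fin d₁ × Fin d₂ × Fin d₃) ⊕ (Fin d₁ × Fin d₂ × Fin d₃))).symm with he
  refine ⟨n,
    fun x k => Sum.elim (fun p => (uC x p).re) (fun p => (uC x p).im) (e k),
    fun q k => Sum.elim (fun p => (wC q.1 q.2 p).re) (fun p => (wC q.1 q.2 p).im) (e k),
    ?_, ?_, ?_⟩
  · intro x
    calc ∑ k, (Sum.elim (fun p => (uC x p).re) (fun p => (uC x p).im) (e k))^2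
        = ∑ t : (Fin d₁ × Fin d₂ × Fin d₃) ⊕ (Fin d₁ × Fin d₂ × Fin d₃), (Sum.elim (fun p => (uC x p).re) (fun p => (uC x p).im) t)^2 :=
          Equiv.sum_comp e (fun t => (Sum.elim (fun p => (uC x p).re) (fun p => (uC x p).im) t)^2)
      _ = ∑ p : Fin d₁ × Fin d₂ × Fin d₃, ((uC x p).re)^2 + ∑ p : Fin d₁ × Fin d₂ × Fin d₃, ((uC x p).im)^2 := by
          rw [Fintype.sum_sum_type]
          simp
      _ = ∑ p : Fin d₁ × Fin d₂ × Fin d₃, Complex.normSq (uC x p) := by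
          rw [← Finset.sum_add_distrib]
          apply Finset.sum_congr rfl; intro p _
          rw [Complex.normSq_apply]; ring
      _ ≤ 1 := hun x
  · intro q
    calc ∑ k, (Sum.elim (fun p => (wC q.1 q.2 p).re) (fun p => (wC q.1 q.2 p).im) (e k))^2
        = ∑ t : (Fin d₁ × Fin d₂ × Fin d₃) ⊕ (Fin d₁ × Fin d₂ × Fin d₃), (Sum.elim (fun p => (wC q.1 q.2 p).re) (fun p => (wC q.1 q.2 p).im) t)^2 :=
          Equiv.sum_comp e (fun t => (Sum.elim (fun p => (wC q.1 q.2 p).re) (fun p => (wC q.1 q.2 p).im) t)^2)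
      _ = ∑ p : Fin d₁ × Fin d₂ × Fin d₃, ((wC q.1 q.2 p).re)^2 + ∑ p : Fin d₁ × Fin d₂ × Fin d₃, ((wC q.1 q.2 p).im)^2 := by
          rw [Fintype.sum_sum_type]
          simp
      _ = ∑ p : Fin d₁ × Fin d₂ × Fin d₃, Complex.normSq (wC q.1 q.2 p) := by
          rw [← Finset.sum_add_distrib]
          apply Finset.sum_congr rfl; intro p _
          rw [Complex.normSq_apply]; ring
      _ ≤ 1 := hwn q.1 q.2
  · intro x y z
    have h1 : ((γ x y z : ℝ) : ℂ).re = γ x y z := Complex.ofReal_re _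
    calc γ x y z = ((γ x y z : ℝ) : ℂ).re := h1.symm
      _ = (∑ p : Fin d₁ × Fin d₂ × Fin d₃, (starRingEnd ℂ) (uC x p) * wC y z p).re := by rw [hrep x y z]
      _ = ∑ p : Fin d₁ × Fin d₂ × Fin d₃, ((starRingEnd ℂ) (uC x p) * wC y z p).re := Complex.re_sum _ _
      _ = ∑ p : Fin d₁ × Fin d₂ × Fin d₃, ((uC x p).re * (wC y z p).re + (uC x p).im * (wC y z p).im) := by
          apply Finset.sum_congr rfl; intro p _
          simp [Complex.mul_re]
      _ = ∑ p : Fin d₁ × Fin d₂ × Fin d₃, (uC x p).re * (wC y z p).re + ∑ p : Fin d₁ × Fin d₂ × Fin d₃, (uC x p).im * (wC y z p).im :=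
          Finset.sum_add_distrib
      _ = ∑ t : (Fin d₁ × Fin d₂ × Fin d₃) ⊕ (Fin d₁ × Fin d₂ × Fin d₃), Sum.elim (fun p => (uC x p).re) (fun p => (uC x p).im) t
            * Sum.elim (fun p => (wC y z p).re) (fun p => (wC y z p).im) t := by
          rw [Fintype.sum_sum_type]
          simp
      _ = ∑ k, Sum.elim (fun p => (uC x p).re) (fun p => (uC x p).im) (e k)
            * Sum.elim (fun p => (wC y z p).re) (fun p => (wC y z p).im) (e k) :=
          (Equiv.sum_comp e (fun t => Sum.elim (fun p => (uC x p).re) (fun p => (uC x p).im) t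
            * Sum.elim (fun p => (wC y z p).re) (fun p => (wC y z p).im) t)).symm

/-- there is a universal constant `C > 0` (Grothendieck's constant works) such
that for every `N` and every tripartite Bell functional `M` on `N` inputs per party, the
supremum of `|⟨M,γ⟩|` over tripartite quantum correlations is at most `C` times the
supremum of `|⟨M,δ⟩|` over tripartite general bilocal correlations.  In particular,
`LV(Q³_cor(N), BL³_cor(N))` is bounded uniformly in `N`. -/
theorem unbounded_bell_stmt3 :
    ∃ C : ℝ, 0 < C ∧ ∀ (N : ℕ) (M : Fin N → Fin N → Fin N → ℝ),
      qSup M ≤ C * bSup M := by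
  have h2m : (0:ℝ) < 2 - Real.sqrt 3 := by linarith [sqrt3_lt_two]
  refine ⟨32 / (2 - Real.sqrt 3), by positivity, ?_⟩
  intro N M
  -- bilocal correlations have entries bounded by 1
  have hhull : ∀ γ : Fin N → Fin N → Fin N → ℝ, IsBilocCorr3 γ → ∀ x y z, |γ x y z| ≤ 1 := by
    intro γ hγ
    have hsub : BilocCorrGenerators N
        ⊆ {γ' : Fin N → Fin N → Fin N → ℝ | ∀ x y z, |γ' x y z| ≤ 1} := by
      rintro γ' ((⟨α, c, hα, hc, hform⟩ | ⟨β, a, hβ, ha, hform⟩) | ⟨δ, b, hδ, hb, hform⟩) <;>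
        intro x y z <;> rw [hform, abs_mul]
      · rcases hc z with h | h <;> rw [h] <;> simpa using hα x y
      · rcases ha x with h | h <;> rw [h] <;> simpa using hβ y z
      · rcases hb y with h | h <;> rw [h] <;> simpa using hδ x z
    have hconv : Convex ℝ {γ' : Fin N → Fin N → Fin N → ℝ | ∀ x y z, |γ' x y z| ≤ 1} := by
      intro γ₁ h₁ γ₂ h₂ a b ha hb hab
      intro x y z
      have hval : (a • γ₁ + b • γ₂) x y z = a * γ₁ x y z + b * γ₂ x y z := by
        simp [Pi.add_apply, Pi.smul_apply, smul_eq_mul]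
      rw [hval]
      calc |a * γ₁ x y z + b * γ₂ x y z| ≤ |a * γ₁ x y z| + |b * γ₂ x y z| := abs_add_le _ _
        _ = a * |γ₁ x y z| + b * |γ₂ x y z| := by
            rw [abs_mul, abs_mul, abs_of_nonneg ha, abs_of_nonneg hb]
        _ ≤ a * 1 + b * 1 := by
            have := h₁ x y z; have := h₂ x y z
            have := mul_le_mul_of_nonneg_left (h₁ x y z) ha
            have := mul_le_mul_of_nonneg_left (h₂ x y z) hb
            linarith
        _ = 1 := by rw [mul_one, mul_one, hab]
    exact convexHull_min hsub hconv hγ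
  have hBdd : BddAbove {v | ∃ γ, IsBilocCorr3 γ ∧ v = |bellVal M γ|} := by
    refine ⟨∑ x, ∑ y, ∑ z, |M x y z|, ?_⟩
    rintro v ⟨γ, hγ, rfl⟩
    calc |bellVal M γ| ≤ ∑ x, |∑ y, ∑ z, M x y z * γ x y z| := Finset.abs_sum_le_sum_abs _ _
      _ ≤ ∑ x, ∑ y, |∑ z, M x y z * γ x y z| :=
          Finset.sum_le_sum (fun x _ => Finset.abs_sum_le_sum_abs _ _)
      _ ≤ ∑ x, ∑ y, ∑ z, |M x y z * γ x y z| := by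
          apply Finset.sum_le_sum; intro x _
          exact Finset.sum_le_sum (fun y _ => Finset.abs_sum_le_sum_abs _ _)
      _ ≤ ∑ x, ∑ y, ∑ z, |M x y z| := by
          apply Finset.sum_le_sum; intro x _
          apply Finset.sum_le_sum; intro y _
          apply Finset.sum_le_sum; intro z _
          rw [abs_mul]
          have h1 := hhull γ hγ x y z
          nlinarith [abs_nonneg (M x y z), abs_nonneg (γ x y z)]
  have h0mem : (0:ℝ) ∈ {v | ∃ γ, IsBilocCorr3 γ ∧ v = |bellVal M γ|} := by
    refine ⟨fun _ _ _ => 0, ?_, by simp [bellVal]⟩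
    apply subset_convexHull
    exact Or.inl (Or.inl ⟨fun _ _ => 0, fun _ => 1, fun x y => by norm_num,
      fun x => Or.inl rfl, fun x y z => by norm_num⟩)
  have hb0 : 0 ≤ bSup M := le_csSup hBdd h0mem
  have hgen : ∀ γ ∈ BilocCorrGenerators N, |bellVal M γ| ≤ bSup M := by
    intro γ hγ
    exact le_csSup hBdd ⟨γ, subset_convexHull ℝ _ hγ, rfl⟩
  -- the sign bound hypothesis for Grothendieck's inequality
  have hL : ∀ (a : Fin N → ℝ) (b : Fin N × Fin N → ℝ), (∀ i, |a i| ≤ 1) → (∀ j, |b j| ≤ 1) →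
      |∑ x, ∑ p : Fin N × Fin N, M x p.1 p.2 * (a x * b p)| ≤ bSup M := by
    intro a b ha hb
    set c : Fin N → ℝ := fun x => ∑ p : Fin N × Fin N, M x p.1 p.2 * b p with hc
    have h1 : ∑ x, ∑ p : Fin N × Fin N, M x p.1 p.2 * (a x * b p) = ∑ x, a x * c x := by
      apply Finset.sum_congr rfl; intro x _
      rw [hc]
      simp only []
      rw [Finset.mul_sum]
      apply Finset.sum_congr rfl; intro p _
      ring
    set s : Fin N → ℝ := fun x => if 0 ≤ c x then 1 else -1 with hs
    have hs1 : PM1 s := by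
      intro x
      by_cases h : 0 ≤ c x
      · exact Or.inl (by simp [hs, h])
      · exact Or.inr (by simp [hs, h])
    have habs : ∀ x, |c x| = s x * c x := by
      intro x
      by_cases h : 0 ≤ c x
      · rw [abs_of_nonneg h]; simp [hs, h]
      · rw [abs_of_neg (lt_of_not_ge h)]; simp [hs, h]
    set γg : Fin N → Fin N → Fin N → ℝ := fun x y z => b (y, z) * s x with hγg
    have hmem : γg ∈ BilocCorrGenerators N :=
      Or.inl (Or.inr ⟨fun y z => b (y, z), s, fun y z => hb (y, z), hs1,
        fun x y z => rfl⟩)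
    have hval : bellVal M γg = ∑ x, s x * c x := by
      rw [bellVal]
      apply Finset.sum_congr rfl; intro x _
      calc ∑ y, ∑ z, M x y z * γg x y z
          = s x * ∑ y, ∑ z, M x y z * b (y, z) := by
            rw [Finset.mul_sum]
            apply Finset.sum_congr rfl; intro y _
            rw [Finset.mul_sum]
            apply Finset.sum_congr rfl; intro z _
            rw [hγg]
            ring
        _ = s x * c x := by
            congr 1
            rw [hc]
            simp only [Fintype.sum_prod_type]
    calc |∑ x, ∑ p : Fin N × Fin N, M x p.1 p.2 * (a x * b p)|
        = |∑ x, a x * c x| := by rw [h1]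
      _ ≤ ∑ x, |a x * c x| := Finset.abs_sum_le_sum_abs _ _
      _ ≤ ∑ x, |c x| := by
          apply Finset.sum_le_sum; intro x _
          rw [abs_mul]
          nlinarith [ha x, abs_nonneg (c x), abs_nonneg (a x)]
      _ = ∑ x, s x * c x := Finset.sum_congr rfl (fun x _ => habs x)
      _ = bellVal M γg := hval.symm
      _ ≤ |bellVal M γg| := le_abs_self _
      _ ≤ bSup M := hgen γg hmem
  -- conclude via Grothendieck's inequality
  apply Real.sSup_le
  · rintro v ⟨γ, hq, rfl⟩
    obtain ⟨n, u, w, hu, hw, hrep⟩ := quantum_vectors γ hq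
    have hbv : bellVal M γ
        = ∑ x, ∑ p : Fin N × Fin N, M x p.1 p.2 * (∑ k, u x k * w p k) := by
      rw [bellVal]
      apply Finset.sum_congr rfl; intro x _
      simp only [Fintype.sum_prod_type]
      apply Finset.sum_congr rfl; intro y _
      apply Finset.sum_congr rfl; intro z _
      rw [hrep x y z]
    rw [hbv]
    exact grothendieck (fun x (p : Fin N × Fin N) => M x p.1 p.2) (bSup M) hL u w hu hw
  · positivity

end BellCorr
end
end

section
/- There exists a universal constant C > 0 such that for every n ≥ 1, every Hadamard matrix H = (h_{xy})_{x,y=1}^{2^n}, and every N ≥ 2ⁿ, the tripartite Bell functional M defined by M_{xyz} = h_{xy} for 1 ≤ x, y ≤ 2ⁿ, z = 1 and M_{xyz} = 0 otherwise satisfies: for every tripartite quantum correlation γ with N inputs per party, |∑_{x,y,z} M_{xyz} γ_{xyz}| ≤ C·(2ⁿ)^{3/2}. -/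
open scoped BigOperators
open Kronecker

noncomputable section

namespace BellCorr

private lemma cs_sum {ι : Type*} [Fintype ι] (f g : ι → ℂ) :
    ‖∑ i, (starRingEnd ℂ) (f i) * g i‖ ≤
      Real.sqrt (∑ i, Complex.normSq (f i)) * Real.sqrt (∑ i, Complex.normSq (g i)) := by
  have h := norm_inner_le_norm (𝕜 := ℂ) ((WithLp.equiv 2 (ι → ℂ)).symm f) ((WithLp.equiv 2 (ι → ℂ)).symm g)
  simp only [PiLp.inner_apply, RCLike.inner_apply, EuclideanSpace.norm_eq] at h
  convert h using 3
  · rfl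
  all_goals simp [Complex.normSq_eq_norm_sq, mul_comm]

private lemma sum4_comm {α β γ δ M : Type*} [Fintype α] [Fintype β] [Fintype γ] [Fintype δ]
    [AddCommMonoid M] (f : α → β → γ → δ → M) :
    (∑ a, ∑ b, ∑ c, ∑ d, f a b c d) = ∑ c, ∑ d, ∑ a, ∑ b, f a b c d := by
  calc (∑ a, ∑ b, ∑ c, ∑ d, f a b c d)
      = ∑ a, ∑ c, ∑ b, ∑ d, f a b c d :=
        Finset.sum_congr rfl fun a _ => Finset.sum_comm
    _ = ∑ c, ∑ a, ∑ b, ∑ d, f a b c d := Finset.sum_comm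
    _ = ∑ c, ∑ a, ∑ d, ∑ b, f a b c d :=
        Finset.sum_congr rfl fun c _ => Finset.sum_congr rfl fun a _ => Finset.sum_comm
    _ = ∑ c, ∑ d, ∑ a, ∑ b, f a b c d :=
        Finset.sum_congr rfl fun c _ => Finset.sum_comm

private lemma had_sum {m : ℕ} {ι : Type*} [Fintype ι] (c : ℝ) (H : Matrix (Fin m) (Fin m) ℝ)
    (hH : ∀ x x' : Fin m, (∑ y, H x y * H x' y) = if x = x' then c else 0)
    (u : Fin m → ι → ℂ) :
    (∑ y, ∑ k, Complex.normSq (∑ x, (H x y : ℂ) * u x k)) =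
      c * ∑ x, ∑ k, Complex.normSq (u x k) := by
  classical
  have key : ((∑ y, ∑ k, Complex.normSq (∑ x, (H x y : ℂ) * u x k) : ℝ) : ℂ) =
      ((c * ∑ x, ∑ k, Complex.normSq (u x k) : ℝ) : ℂ) := by
    push_cast
    calc (∑ y, ∑ k : ι, ((Complex.normSq (∑ x, (H x y : ℂ) * u x k) : ℝ) : ℂ))
        = ∑ y, ∑ k : ι, (starRingEnd ℂ) (∑ x, (H x y : ℂ) * u x k) *
            (∑ x', (H x' y : ℂ) * u x' k) := by
          simp only [Complex.normSq_eq_conj_mul_self]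
      _ = ∑ y, ∑ k : ι, ∑ x, ∑ x', ((H x y : ℂ) * (H x' y : ℂ)) *
            ((starRingEnd ℂ) (u x k) * u x' k) := by
          refine Finset.sum_congr rfl fun y _ => Finset.sum_congr rfl fun k _ => ?_
          rw [map_sum, Finset.sum_mul_sum]
          refine Finset.sum_congr rfl fun x _ => Finset.sum_congr rfl fun x' _ => ?_
          simp only [map_mul, Complex.conj_ofReal]
          ring
      _ = ∑ x, ∑ x', ∑ y, ∑ k : ι, ((H x y : ℂ) * (H x' y : ℂ)) *
            ((starRingEnd ℂ) (u x k) * u x' k) := sum4_comm _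
      _ = ∑ x, ∑ x', ((∑ y, (H x y : ℂ) * (H x' y : ℂ))) *
            (∑ k : ι, (starRingEnd ℂ) (u x k) * u x' k) := by
          refine Finset.sum_congr rfl fun x _ => Finset.sum_congr rfl fun x' _ => ?_
          rw [Finset.sum_mul_sum]
      _ = ∑ x, ∑ x', (if x = x' then (c:ℂ) else 0) *
            (∑ k : ι, (starRingEnd ℂ) (u x k) * u x' k) := by
          refine Finset.sum_congr rfl fun x _ => Finset.sum_congr rfl fun x' _ => ?_
          congr 1
          have h1 : (∑ y, (H x y : ℂ) * (H x' y : ℂ)) = ((∑ y, H x y * H x' y : ℝ) : ℂ) := by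
            push_cast; rfl
          rw [h1, hH x x', apply_ite (fun r : ℝ => (r : ℂ))]
          norm_num
      _ = ∑ x, (c:ℂ) * (∑ k : ι, (starRingEnd ℂ) (u x k) * u x k) := by
          refine Finset.sum_congr rfl fun x _ => ?_
          simp [ite_mul, zero_mul]
      _ = (c:ℂ) * ∑ x, ∑ k : ι, ((Complex.normSq (u x k) : ℝ) : ℂ) := by
          rw [Finset.mul_sum]
          refine Finset.sum_congr rfl fun x _ => ?_
          congr 1
          refine Finset.sum_congr rfl fun k _ => ?_
          rw [Complex.normSq_eq_conj_mul_self]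
  exact_mod_cast key

private lemma inner_form {d₁ : ℕ} {P : Type*} [Fintype P] (ψ : Fin d₁ × P → ℂ)
    (A : Matrix (Fin d₁) (Fin d₁) ℂ) (G : Matrix P P ℂ) :
    (∑ i : Fin d₁ × P, ∑ j : Fin d₁ × P,
        (starRingEnd ℂ) (ψ i) * (A i.1 j.1 * G i.2 j.2) * ψ j)
      = ∑ k : Fin d₁ × P,
          (starRingEnd ℂ) (∑ i₁, (starRingEnd ℂ) (A i₁ k.1) * ψ (i₁, k.2)) *
          (∑ j₂, G k.2 j₂ * ψ (k.1, j₂)) := by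
  classical
  have hrhs : (∑ k : Fin d₁ × P,
      (starRingEnd ℂ) (∑ i₁, (starRingEnd ℂ) (A i₁ k.1) * ψ (i₁, k.2)) *
      (∑ j₂, G k.2 j₂ * ψ (k.1, j₂)))
      = ∑ k : Fin d₁ × P, ∑ q : Fin d₁ × P,
          (A q.1 k.1 * (starRingEnd ℂ) (ψ (q.1, k.2))) * (G k.2 q.2 * ψ (k.1, q.2)) := by
    refine Finset.sum_congr rfl fun k _ => ?_
    rw [map_sum, Finset.sum_mul_sum, Fintype.sum_prod_type]
    refine Finset.sum_congr rfl fun i₁ _ => Finset.sum_congr rfl fun j₂ _ => ?_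
    simp only [map_mul, Complex.conj_conj]
  rw [hrhs, ← Fintype.sum_prod_type (f := fun p : (Fin d₁ × P) × (Fin d₁ × P) =>
      (starRingEnd ℂ) (ψ p.1) * (A p.1.1 p.2.1 * G p.1.2 p.2.2) * ψ p.2),
    ← Fintype.sum_prod_type (f := fun p : (Fin d₁ × P) × (Fin d₁ × P) =>
      (A p.2.1 p.1.1 * (starRingEnd ℂ) (ψ (p.2.1, p.1.2))) * (G p.1.2 p.2.2 * ψ (p.1.1, p.2.2)))]
  refine Fintype.sum_equiv ⟨fun p => ((p.2.1, p.1.2), (p.1.1, p.2.2)),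
    fun p => ((p.2.1, p.1.2), (p.1.1, p.2.2)), ?_, ?_⟩ _ _ ?_
  · rintro ⟨⟨a, b⟩, c, d⟩; rfl
  · rintro ⟨⟨a, b⟩, c, d⟩; rfl
  · rintro ⟨⟨a, b⟩, c, d⟩
    simp only [Equiv.coe_fn_mk]
    ring

private lemma quantum_core {m d₁ d₂ d₃ : ℕ} (c : ℝ) (hc : 0 ≤ c)
    (H : Matrix (Fin m) (Fin m) ℝ)
    (horth : ∀ x x' : Fin m, (∑ y, H x y * H x' y) = if x = x' then c else 0)
    (ψ : Fin d₁ × Fin d₂ × Fin d₃ → ℂ) (hψ : (∑ i, Complex.normSq (ψ i)) = 1)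
    (A : Fin m → Matrix (Fin d₁) (Fin d₁) ℂ)
    (hAh : ∀ x, (A x).IsHermitian)
    (hAc : ∀ x v, (∑ i, Complex.normSq ((A x).mulVec v i)) ≤ ∑ i, Complex.normSq (v i))
    (G : Fin m → Matrix (Fin d₂ × Fin d₃) (Fin d₂ × Fin d₃) ℂ)
    (hG : ∀ y w, (∑ p, Complex.normSq ((G y).mulVec w p)) ≤ ∑ p, Complex.normSq (w p))
    (g : Fin m → Fin m → ℝ)
    (hg : ∀ x y, ((g x y : ℝ) : ℂ) =
        ∑ i : Fin d₁ × Fin d₂ × Fin d₃, ∑ j : Fin d₁ × Fin d₂ × Fin d₃,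
          (starRingEnd ℂ) (ψ i) * (A x i.1 j.1 * G y i.2 j.2) * ψ j) :
    |∑ x, ∑ y, H x y * g x y| ≤ Real.sqrt c * (m : ℝ) := by
  classical
  set u : Fin m → (Fin d₁ × Fin d₂ × Fin d₃) → ℂ :=
    fun x k => ∑ i₁, (starRingEnd ℂ) (A x i₁ k.1) * ψ (i₁, k.2) with hu_def
  set v : Fin m → (Fin d₁ × Fin d₂ × Fin d₃) → ℂ :=
    fun y k => ∑ j₂, G y k.2 j₂ * ψ (k.1, j₂) with hv_def
  -- the inner-product representation of g
  have huv : ∀ x y, ((g x y : ℝ) : ℂ) =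
      ∑ k : Fin d₁ × Fin d₂ × Fin d₃, (starRingEnd ℂ) (u x k) * v y k := by
    intro x y
    rw [hg x y, inner_form ψ (A x) (G y)]
  -- norm bound for u
  have hψ' : (∑ k₂ : Fin d₂ × Fin d₃, ∑ i₁ : Fin d₁, Complex.normSq (ψ (i₁, k₂))) = 1 := by
    rw [Finset.sum_comm, ← Fintype.sum_prod_type (f := fun i : Fin d₁ × Fin d₂ × Fin d₃ => Complex.normSq (ψ i))]
    exact hψ
  have hu1 : ∀ x, (∑ k : Fin d₁ × Fin d₂ × Fin d₃, Complex.normSq (u x k)) ≤ 1 := by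
    intro x
    have hval : ∀ k : Fin d₁ × Fin d₂ × Fin d₃, u x k = (A x).mulVec (fun i₁ => ψ (i₁, k.2)) k.1 := by
      intro k
      simp only [hu_def, Matrix.mulVec, dotProduct]
      refine Finset.sum_congr rfl fun i₁ _ => ?_
      congr 1
      simpa [Matrix.conjTranspose_apply] using congrFun (congrFun (hAh x) k.1) i₁
    calc (∑ k : Fin d₁ × Fin d₂ × Fin d₃, Complex.normSq (u x k))
        = ∑ k₁ : Fin d₁, ∑ k₂ : Fin d₂ × Fin d₃, Complex.normSq ((A x).mulVec (fun i₁ => ψ (i₁, k₂)) k₁) := by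
          simp only [hval]
          rw [Fintype.sum_prod_type (f := fun k : Fin d₁ × Fin d₂ × Fin d₃ =>
            Complex.normSq ((A x).mulVec (fun i₁ => ψ (i₁, k.2)) k.1))]
      _ = ∑ k₂ : Fin d₂ × Fin d₃, ∑ k₁ : Fin d₁, Complex.normSq ((A x).mulVec (fun i₁ => ψ (i₁, k₂)) k₁) :=
          Finset.sum_comm
      _ ≤ ∑ k₂ : Fin d₂ × Fin d₃, ∑ i₁ : Fin d₁, Complex.normSq (ψ (i₁, k₂)) :=
          Finset.sum_le_sum fun k₂ _ => hAc x _
      _ = 1 := hψ'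
  -- norm bound for v
  have hv1 : ∀ y, (∑ k : Fin d₁ × Fin d₂ × Fin d₃, Complex.normSq (v y k)) ≤ 1 := by
    intro y
    have hval : ∀ k : Fin d₁ × Fin d₂ × Fin d₃, v y k = (G y).mulVec (fun j₂ => ψ (k.1, j₂)) k.2 := by
      intro k; rfl
    calc (∑ k : Fin d₁ × Fin d₂ × Fin d₃, Complex.normSq (v y k))
        = ∑ k₁ : Fin d₁, ∑ k₂ : Fin d₂ × Fin d₃, Complex.normSq ((G y).mulVec (fun j₂ => ψ (k₁, j₂)) k₂) := by
          simp only [hval]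
          rw [Fintype.sum_prod_type (f := fun k : Fin d₁ × Fin d₂ × Fin d₃ =>
            Complex.normSq ((G y).mulVec (fun j₂ => ψ (k.1, j₂)) k.2))]
      _ ≤ ∑ k₁ : Fin d₁, ∑ j₂ : Fin d₂ × Fin d₃, Complex.normSq (ψ (k₁, j₂)) :=
          Finset.sum_le_sum fun k₁ _ => hG y _
      _ = 1 := by
          rw [← Fintype.sum_prod_type (f := fun i : Fin d₁ × Fin d₂ × Fin d₃ => Complex.normSq (ψ i))]
          exact hψ
  -- the combined vector T
  set T : (Fin m × (Fin d₁ × Fin d₂ × Fin d₃)) → ℂ := fun p => ∑ x, ((H x p.1 : ℝ) : ℂ) * u x p.2 with hT_def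
  set V : (Fin m × (Fin d₁ × Fin d₂ × Fin d₃)) → ℂ := fun p => v p.1 p.2 with hV_def
  -- representation of the Bell value
  have hS : (((∑ x, ∑ y, H x y * g x y : ℝ)) : ℂ) =
      ∑ p : Fin m × (Fin d₁ × Fin d₂ × Fin d₃), (starRingEnd ℂ) (T p) * V p := by
    rw [Fintype.sum_prod_type (f := fun p : Fin m × (Fin d₁ × Fin d₂ × Fin d₃) =>
      (starRingEnd ℂ) (T p) * V p)]
    have rhs1 : (∑ y, ∑ k : Fin d₁ × Fin d₂ × Fin d₃, (starRingEnd ℂ) (T (y, k)) * V (y, k))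
        = ∑ x, ∑ y, ((H x y : ℝ) : ℂ) * ∑ k : Fin d₁ × Fin d₂ × Fin d₃, (starRingEnd ℂ) (u x k) * v y k := by
      calc (∑ y, ∑ k : Fin d₁ × Fin d₂ × Fin d₃, (starRingEnd ℂ) (T (y, k)) * V (y, k))
          = ∑ y, ∑ k : Fin d₁ × Fin d₂ × Fin d₃, ∑ x,
              ((H x y : ℝ) : ℂ) * ((starRingEnd ℂ) (u x k) * v y k) := by
            refine Finset.sum_congr rfl fun y _ => Finset.sum_congr rfl fun k _ => ?_
            simp only [hT_def, hV_def]
            rw [map_sum, Finset.sum_mul]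
            refine Finset.sum_congr rfl fun x _ => ?_
            simp only [map_mul, Complex.conj_ofReal]
            ring
        _ = ∑ y, ∑ x, ((H x y : ℝ) : ℂ) * ∑ k : Fin d₁ × Fin d₂ × Fin d₃,
              (starRingEnd ℂ) (u x k) * v y k := by
            refine Finset.sum_congr rfl fun y _ => ?_
            rw [Finset.sum_comm]
            exact Finset.sum_congr rfl fun x _ => (Finset.mul_sum _ _ _).symm
        _ = _ := Finset.sum_comm
    rw [rhs1]
    push_cast
    refine Finset.sum_congr rfl fun x _ => Finset.sum_congr rfl fun y _ => ?_
    rw [← huv x y]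
  -- norm of T
  have hT2 : (∑ p : Fin m × (Fin d₁ × Fin d₂ × Fin d₃), Complex.normSq (T p)) ≤ c * (m : ℝ) := by
    rw [Fintype.sum_prod_type (f := fun p : Fin m × (Fin d₁ × Fin d₂ × Fin d₃) => Complex.normSq (T p))]
    have := had_sum c H horth u
    rw [this]
    have hsum : (∑ x, ∑ k : Fin d₁ × Fin d₂ × Fin d₃, Complex.normSq (u x k)) ≤ (m : ℝ) := by
      calc (∑ x, ∑ k : Fin d₁ × Fin d₂ × Fin d₃, Complex.normSq (u x k))
          ≤ ∑ _x : Fin m, (1 : ℝ) := Finset.sum_le_sum fun x _ => hu1 x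
        _ = (m : ℝ) := by simp
    exact mul_le_mul_of_nonneg_left hsum hc
  -- norm of V
  have hV2 : (∑ p : Fin m × (Fin d₁ × Fin d₂ × Fin d₃), Complex.normSq (V p)) ≤ (m : ℝ) := by
    rw [Fintype.sum_prod_type (f := fun p : Fin m × (Fin d₁ × Fin d₂ × Fin d₃) => Complex.normSq (V p))]
    calc (∑ y, ∑ k : Fin d₁ × Fin d₂ × Fin d₃, Complex.normSq (V (y, k)))
        ≤ ∑ _y : Fin m, (1 : ℝ) := Finset.sum_le_sum fun y _ => hv1 y
      _ = (m : ℝ) := by simp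
  -- put everything together
  have hm0 : (0 : ℝ) ≤ (m : ℝ) := Nat.cast_nonneg m
  calc |∑ x, ∑ y, H x y * g x y|
      = ‖(((∑ x, ∑ y, H x y * g x y : ℝ)) : ℂ)‖ := by
        rw [Complex.norm_real, Real.norm_eq_abs]
    _ = ‖∑ p : Fin m × (Fin d₁ × Fin d₂ × Fin d₃), (starRingEnd ℂ) (T p) * V p‖ := by rw [hS]
    _ ≤ Real.sqrt (∑ p, Complex.normSq (T p)) * Real.sqrt (∑ p, Complex.normSq (V p)) :=
        cs_sum T V
    _ ≤ Real.sqrt (c * (m : ℝ)) * Real.sqrt (m : ℝ) :=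
        mul_le_mul (Real.sqrt_le_sqrt hT2) (Real.sqrt_le_sqrt hV2)
          (Real.sqrt_nonneg _) (Real.sqrt_nonneg _)
    _ = Real.sqrt c * (Real.sqrt (m : ℝ) * Real.sqrt (m : ℝ)) := by
        rw [Real.sqrt_mul hc]; ring
    _ = Real.sqrt c * (m : ℝ) := by rw [Real.mul_self_sqrt hm0]


private lemma sum_castLE_of_vanish {m N : ℕ} (h : m ≤ N) (f : Fin N → ℝ)
    (hf : ∀ x : Fin N, m ≤ (x : ℕ) → f x = 0) :
    ∑ x : Fin N, f x = ∑ x : Fin m, f (Fin.castLE h x) := by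
  classical
  have h1 : ∑ x : Fin m, f (Fin.castLE h x) = ∑ x ∈ Finset.univ.map (Fin.castLEEmb h), f x := by
    rw [Finset.sum_map]; rfl
  rw [h1]
  refine (Finset.sum_subset (Finset.subset_univ _) ?_).symm
  intro x _ hx
  apply hf
  by_contra hlt
  push_neg at hlt
  exact hx (Finset.mem_map.2 ⟨⟨x.1, hlt⟩, Finset.mem_univ _, rfl⟩)

private lemma kron_contr {d₂ d₃ : ℕ} {B : Matrix (Fin d₂) (Fin d₂) ℂ} {C : Matrix (Fin d₃) (Fin d₃) ℂ}
    (hB : ∀ v, (∑ i, Complex.normSq (B.mulVec v i)) ≤ ∑ i, Complex.normSq (v i))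
    (hC : ∀ v, (∑ i, Complex.normSq (C.mulVec v i)) ≤ ∑ i, Complex.normSq (v i))
    (w : Fin d₂ × Fin d₃ → ℂ) :
    (∑ p, Complex.normSq ((B ⊗ₖ C).mulVec w p)) ≤ ∑ p, Complex.normSq (w p) := by
  classical
  set w₁ : Fin d₂ × Fin d₃ → ℂ := fun q => C.mulVec (fun j₃ => w (q.1, j₃)) q.2 with hw₁
  have key : ∀ p : Fin d₂ × Fin d₃,
      (B ⊗ₖ C).mulVec w p = B.mulVec (fun j₂ => w₁ (j₂, p.2)) p.1 := by
    rintro ⟨i₂, i₃⟩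
    simp only [Matrix.mulVec, dotProduct, hw₁, Fintype.sum_prod_type,
      Matrix.kroneckerMap_apply, Finset.mul_sum]
    apply Finset.sum_congr rfl
    intro j₂ _
    apply Finset.sum_congr rfl
    intro j₃ _
    ring
  calc (∑ p, Complex.normSq ((B ⊗ₖ C).mulVec w p))
      = ∑ i₃ : Fin d₃, ∑ i₂ : Fin d₂, Complex.normSq (B.mulVec (fun j₂ => w₁ (j₂, i₃)) i₂) := by
        simp only [key, Fintype.sum_prod_type]
        exact Finset.sum_comm
    _ ≤ ∑ i₃ : Fin d₃, ∑ j₂ : Fin d₂, Complex.normSq (w₁ (j₂, i₃)) :=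
        Finset.sum_le_sum fun i₃ _ => hB _
    _ = ∑ j₂ : Fin d₂, ∑ i₃ : Fin d₃, Complex.normSq (C.mulVec (fun j₃ => w (j₂, j₃)) i₃) := by
        rw [Finset.sum_comm]
    _ ≤ ∑ j₂ : Fin d₂, ∑ j₃ : Fin d₃, Complex.normSq (w (j₂, j₃)) :=
        Finset.sum_le_sum fun j₂ _ => hC _
    _ = ∑ p, Complex.normSq (w p) := by rw [Fintype.sum_prod_type]

/-- there is a universal constant `C > 0` (the real Grothendieck constant
works) such that for every `n`, every `2ⁿ × 2ⁿ` Hadamard matrix `H`, every `N ≥ 2ⁿ` and the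
tripartite Bell functional `M` given by `M_{xyz} = h_{xy}` for `x, y < 2ⁿ`, `z = 0` and
`M_{xyz} = 0` otherwise, every tripartite quantum correlation `γ` with `N` inputs per party
satisfies `|⟨M,γ⟩| ≤ C (2ⁿ)^{3/2}`. -/
theorem unbounded_bell_stmt6 :
    ∃ C : ℝ, 0 < C ∧ ∀ (n N : ℕ), 1 ≤ n → 2 ^ n ≤ N →
      ∀ H : Matrix (Fin (2 ^ n)) (Fin (2 ^ n)) ℝ,
        (∀ x y, H x y = 1 ∨ H x y = -1) →
        H * H.transpose = ((2 : ℝ) ^ n) • 1 →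
        ∀ M : Fin N → Fin N → Fin N → ℝ,
          (M = fun (x y z : Fin N) =>
            if hx : x.1 < 2 ^ n then
              if hy : y.1 < 2 ^ n then
                if z.1 = 0 then H ⟨x.1, hx⟩ ⟨y.1, hy⟩ else 0
              else 0
            else 0) →
          ∀ γ : Fin N → Fin N → Fin N → ℝ, IsQuantumCorr3 γ →
            |bellVal M γ| ≤ C * ((2 : ℝ) ^ n) ^ ((3 : ℝ) / 2) := by
  classical
  refine ⟨2, by norm_num, ?_⟩
  intro n N hn hN H hpm hHH M hM γ hq
  obtain ⟨d₁, d₂, d₃, ψ, A, B, C, hψ, hA, hB, hC, hγ⟩ := hq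
  subst hM
  have hzlt : 0 < 2 ^ n := Nat.pow_pos (by norm_num)
  set z₀ : Fin N := ⟨0, lt_of_lt_of_le hzlt hN⟩ with hz₀def
  set emb : Fin (2 ^ n) → Fin N := Fin.castLE hN with hembdef
  -- orthogonality of rows of H
  have horth : ∀ x x' : Fin (2 ^ n), (∑ y, H x y * H x' y) = if x = x' then ((2:ℝ)^n) else 0 := by
    intro x x'
    have := congrFun (congrFun hHH x) x'
    simpa [Matrix.mul_apply, Matrix.transpose_apply, Matrix.one_apply, Matrix.smul_apply,
      apply_ite] using this
  -- reduction of the Bell value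
  have hred : bellVal (fun (x y z : Fin N) =>
      if hx : x.1 < 2 ^ n then
        if hy : y.1 < 2 ^ n then
          if z.1 = 0 then H ⟨x.1, hx⟩ ⟨y.1, hy⟩ else 0
        else 0
      else 0) γ
      = ∑ x : Fin (2 ^ n), ∑ y : Fin (2 ^ n), H x y * γ (emb x) (emb y) z₀ := by
    simp only [bellVal]
    rw [sum_castLE_of_vanish hN _ (fun x hx => by
      simp [dif_neg (not_lt.mpr hx)])]
    refine Finset.sum_congr rfl fun x _ => ?_
    rw [sum_castLE_of_vanish hN _ (fun y hy => by
      simp [dif_neg (not_lt.mpr hy)])]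
    refine Finset.sum_congr rfl fun y _ => ?_
    rw [Finset.sum_eq_single z₀]
    · simp [hz₀def, Fin.eta, hembdef]
    · intro z _ hz
      have : (z : ℕ) ≠ 0 := fun h0 => hz (Fin.ext (by simp [h0, hz₀def]))
      simp [this]
    · intro h; exact absurd (Finset.mem_univ z₀) h
  rw [hred]
  -- apply the core estimate
  have hcore := quantum_core ((2:ℝ)^n) (by positivity) H horth ψ hψ
    (fun x => A (emb x)) (fun x => (hA (emb x)).1) (fun x => (hA (emb x)).2)
    (fun y => (B (emb y)) ⊗ₖ (C z₀))
    (fun y => kron_contr (hB (emb y)).2 (hC z₀).2)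
    (fun x y => γ (emb x) (emb y) z₀)
    (fun x y => hγ (emb x) (emb y) z₀)
  refine le_trans hcore ?_
  -- numerics : √(2^n) * 2^n ≤ 2 * (2^n)^(3/2)
  have hx : (0:ℝ) < (2:ℝ)^n := by positivity
  have hcast : (((2:ℕ)^n : ℕ) : ℝ) = (2:ℝ)^n := by push_cast; ring
  rw [hcast]
  have h32 : ((2:ℝ)^n) ^ ((3:ℝ)/2) = (2:ℝ)^n * Real.sqrt ((2:ℝ)^n) := by
    rw [show ((3:ℝ)/2) = 1 + 1/2 by norm_num, Real.rpow_add hx, Real.rpow_one,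
      Real.sqrt_eq_rpow]
  rw [h32]
  nlinarith [Real.sqrt_nonneg ((2:ℝ)^n), hx, mul_nonneg (Real.sqrt_nonneg ((2:ℝ)^n)) hx.le]


end BellCorr
end
end
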